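/- arXiv:1610.04295 — 8 statements merged into one kernel-verified Lean document; each statement's English description precedes it below -/
import Mathlib

section
/- Let p be an odd prime, k an even positive integer, and λ an integer with 0 ≤ λ < p. Setting l = (−1)^{k(p−1)/4} · p^{(k−2)/2}, one has ρ_{k,λ}(p) = p^{k−1} − l + (1 − |(λ/p)|) · p · l; equivalently, ρ_{k,λ}(p) = p^{k−1} − l when p ∤ λ, and ρ_{k,0}(p) = p^{k−1} + (p−1)·l. -/
/-!
Write `N_k(a)` for the number of solutions of `x₁² + ⋯ + x_k² = a` over a finite field of odd
order `q`, and `χ` for its quadratic character. Splitting off the last coordinate and using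
`#{x | x² = b} = 1 + χ(b)` gives `N_{k+1}(a) = q^k + ∑_b χ(b) N_k(a - b)`. Applied twice, this
produces the kernel `∑_b χ(b) χ(d - b)`, a Jacobi sum equal to `χ(-1) (q [d = 0] - 1)`, whence
`N_{k+2}(a) = q^{k+1} + χ(-1) (q N_k(a) - q^k)`. Induction from `N_0(a) = [a = 0]` gives the
closed form in even dimension, and over `ℤ/pℤ` one has `χ(-1) = (-1)^((p-1)/2)`.
-/

/-- `rho k lam n` is the number of `k`-tuples `(x₁,…,x_k) ∈ (ℤ/nℤ)^k` with
`x₁² + ⋯ + x_k² ≡ lam (mod n)`. -/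
noncomputable def rho (k : ℕ) (lam : ℤ) (n : ℕ) : ℕ :=
  Nat.card {x : Fin k → ZMod n // ∑ i, x i ^ 2 = (lam : ZMod n)}

open Finset

section SumSqCount

variable (R : Type*) [CommRing R] [Fintype R]

noncomputable def sumSqCount (k : ℕ) (a : R) : ℕ :=
  Nat.card {x : Fin k → R // ∑ i, x i ^ 2 = a}

lemma sumSqCount_zero [DecidableEq R] (a : R) : sumSqCount R 0 a = if a = 0 then 1 else 0 := by
  by_cases ha : a = 0 <;> simp [sumSqCount, eq_comm, ha]

lemma sumSqCount_succ (k : ℕ) (a : R) :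
    sumSqCount R (k + 1) a = ∑ b : R, sumSqCount R k (a - b ^ 2) := by
  have e : {x : Fin (k + 1) → R // ∑ i, x i ^ 2 = a} ≃
      Σ b : R, {y : Fin k → R // ∑ i, y i ^ 2 = a - b ^ 2} :=
    ((Fin.consEquiv fun _ => R).subtypeEquiv (p := fun c => c.1 ^ 2 + ∑ i, c.2 i ^ 2 = a)
      fun c => by simp [Fin.sum_univ_succ]).symm.trans <|
    (Equiv.subtypeProdEquivSigmaSubtype
      fun (b : R) (y : Fin k → R) => b ^ 2 + ∑ i, y i ^ 2 = a).trans <|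
    Equiv.sigmaCongrRight fun b => Equiv.subtypeEquivRight fun y => eq_sub_iff_add_eq'.symm
  rw [sumSqCount, Nat.card_congr e, Nat.card_sigma]
  rfl

lemma sum_sumSqCount (k : ℕ) : ∑ a : R, sumSqCount R k a = Fintype.card R ^ k := by
  have h := Nat.card_congr (Equiv.sigmaFiberEquiv fun x : Fin k → R => ∑ i, x i ^ 2)
  rw [Nat.card_sigma, Nat.card_eq_fintype_card, Fintype.card_fun, Fintype.card_fin] at h
  exact h

lemma sum_sumSqCount_sub (k : ℕ) (a : R) :
    ∑ b : R, sumSqCount R k (a - b) = Fintype.card R ^ k :=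
  ((Equiv.subLeft a).sum_comp fun c => sumSqCount R k c).trans (sum_sumSqCount R k)

end SumSqCount

section QuadraticChar

variable {F : Type*} [Field F] [Fintype F] [DecidableEq F]

local notation "χ" => quadraticChar F
local notation "q" => (Fintype.card F : ℤ)

lemma sum_comp_sq (hF : ringChar F ≠ 2) (g : F → ℤ) :
    ∑ x : F, g (x ^ 2) = ∑ b : F, (χ b + 1) * g b := by
  rw [← Fintype.sum_fiberwise (fun x : F => x ^ 2)]
  refine Fintype.sum_congr _ _ fun b => ?_
  rw [Fintype.sum_congr _ _ fun x : {x : F // x ^ 2 = b} => congrArg g x.2, sum_const,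
    nsmul_eq_mul, ← quadraticChar_card_sqrts hF b, Set.toFinset_card, card_univ]
  rfl

lemma sumSqCount_succ_eq_card_pow_add (hF : ringChar F ≠ 2) (k : ℕ) (a : F) :
    (sumSqCount F (k + 1) a : ℤ) = q ^ k + ∑ b : F, χ b * sumSqCount F k (a - b) := by
  have hshift : ∑ b : F, (sumSqCount F k (a - b) : ℤ) = q ^ k :=
    mod_cast sum_sumSqCount_sub F k a
  rw [sumSqCount_succ, Nat.cast_sum, sum_comp_sq hF fun b => (sumSqCount F k (a - b) : ℤ),
    ← hshift, ← sum_add_distrib]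
  exact sum_congr rfl fun b _ => by ring

lemma sum_quadraticChar_mul_sub (hF : ringChar F ≠ 2) (a : F) :
    ∑ b : F, χ b * χ (a - b) = χ (-1) * (q * (if a = 0 then 1 else 0) - 1) := by
  by_cases ha : a = 0
  · have hsq : ∀ b : F, χ b * χ (a - b) = χ (-1) * (χ ^ 2 : MulChar F ℤ) b := fun b => by
      rw [ha, zero_sub, neg_eq_neg_one_mul, map_mul, sq, MulChar.coeToFun_mul, Pi.mul_apply]
      ring
    rw [sum_congr rfl fun b _ => hsq b, ← mul_sum, (quadraticChar_isQuadratic F).sq_eq_one,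
      MulChar.sum_one_eq_card_units, Fintype.card_units, if_pos ha, Nat.cast_sub Fintype.card_pos]
    ring
  · -- substituting `b = a t` turns the sum into the Jacobi sum `J(χ, χ) = J(χ, χ⁻¹)`
    have hscale : ∀ t : F, χ (a * t) * χ (a - a * t) = χ t * χ (1 - t) := fun t => by
      rw [show a - a * t = a * (1 - t) by ring, map_mul, map_mul, ← one_mul (χ t * _),
        ← quadraticChar_sq_one ha]
      ring
    have hJ := jacobiSum_nontrivial_inv (quadraticChar_ne_one hF)
    rw [(quadraticChar_isQuadratic F).inv] at hJ
    rw [← Equiv.sum_comp (Equiv.mulLeft₀ a ha), if_neg ha]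
    simp only [Equiv.mulLeft₀_apply, hscale]
    rw [← jacobiSum, hJ]
    ring

lemma sumSqCount_add_two (hF : ringChar F ≠ 2) (k : ℕ) (a : F) :
    (sumSqCount F (k + 2) a : ℤ) = q ^ (k + 1) + χ (-1) * (q * sumSqCount F k a - q ^ k) := by
  have hconv : ∑ b : F, χ b * ∑ c : F, χ c * sumSqCount F k (a - b - c) =
      ∑ d : F, (∑ b : F, χ b * χ (d - b)) * sumSqCount F k (a - d) := by
    simp_rw [mul_sum, sum_mul]
    conv_rhs => rw [sum_comm]
    refine sum_congr rfl fun b _ => Fintype.sum_equiv (Equiv.addLeft b) _ _ fun c => ?_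
    simp only [Equiv.coe_addLeft, add_sub_cancel_left, sub_sub]
    ring
  have hdelta : ∑ d : F, (if d = 0 then (1 : ℤ) else 0) * sumSqCount F k (a - d) =
      sumSqCount F k a := by
    simp
  have hshift : ∑ d : F, (sumSqCount F k (a - d) : ℤ) = q ^ k :=
    mod_cast sum_sumSqCount_sub F k a
  simp_rw [sumSqCount_succ_eq_card_pow_add hF, mul_add, sum_add_distrib, ← sum_mul,
    quadraticChar_sum_zero hF, zero_mul, zero_add, hconv, sum_quadraticChar_mul_sub hF]
  simp_rw [mul_sub, mul_one, sub_mul, sum_sub_distrib, mul_assoc, ← mul_sum, hdelta, hshift]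

theorem sumSqCount_two_mul_add_two (hF : ringChar F ≠ 2) (m : ℕ) (a : F) :
    (sumSqCount F (2 * m + 2) a : ℤ) =
      q ^ (2 * m + 1) + χ (-1) ^ (m + 1) * q ^ m * (q * (if a = 0 then 1 else 0) - 1) := by
  induction m with
  | zero =>
    rw [sumSqCount_add_two hF, sumSqCount_zero]
    push_cast
    ring
  | succ m ih =>
    rw [show 2 * (m + 1) + 2 = 2 * m + 2 + 2 by ring, sumSqCount_add_two hF, ih]
    ring

lemma abs_quadraticChar (a : F) : |χ a| = 1 - (if a = 0 then 1 else 0) := by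
  by_cases ha : a = 0
  · simp [ha]
  · rcases quadraticChar_dichotomy ha with h | h <;> simp [h, ha]

end QuadraticChar

theorem rho_prime_of_even_general (p : ℕ) [Fact p.Prime] (hp : Odd p) (k : ℕ) (hk0 : 0 < k)
    (hk : Even k) (lam : ℤ) (l : ℤ)
    (hl : l = (-1) ^ (k * (p - 1) / 4) * (p : ℤ) ^ ((k - 2) / 2)) :
    (rho k lam p : ℤ) = (p : ℤ) ^ (k - 1) - l + (1 - |(legendreSym p lam : ℤ)|) * p * l ∧
      (¬ (p : ℤ) ∣ lam → (rho k lam p : ℤ) = (p : ℤ) ^ (k - 1) - l) ∧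
      (rho k 0 p : ℤ) = (p : ℤ) ^ (k - 1) + (p - 1) * l := by
  obtain ⟨m, rfl⟩ : ∃ m, k = 2 * m + 2 := ⟨k / 2 - 1, by grind⟩
  have hF : ringChar (ZMod p) ≠ 2 := by
    rw [ZMod.ringChar_zmod_n]; rintro rfl; exact Nat.not_even_iff_odd.mpr hp even_two
  have hl' : l = quadraticChar (ZMod p) (-1) ^ (m + 1) * (p : ℤ) ^ m := by
    obtain ⟨r, rfl⟩ := hp
    rw [hl, quadraticChar_neg_one hF, ZMod.card, ZMod.χ₄_eq_neg_one_pow (by omega), ← pow_mul]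
    congr 2 <;> grind
  have hrho : ∀ a : ℤ, (rho (2 * m + 2) a p : ℤ) =
      (p : ℤ) ^ (2 * m + 2 - 1) + l * (p * (if (a : ZMod p) = 0 then 1 else 0) - 1) := fun a => by
    rw [rho, ← sumSqCount, sumSqCount_two_mul_add_two hF, ZMod.card, hl']
    rfl
  refine ⟨?_, fun hndvd => ?_, ?_⟩
  · rw [hrho, legendreSym, abs_quadraticChar]
    ring
  · rw [hrho, if_neg fun h => hndvd ((ZMod.intCast_zmod_eq_zero_iff_dvd lam p).mp h)]
    ring
  · rw [hrho, Int.cast_zero, if_pos rfl]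
    ring

/-- Lebesgue's formula for `ρ_{k,λ}(p)` when `k` is even, with
`l = (−1)^{k(p−1)/4} · p^{(k−2)/2}`. -/
theorem rho_prime_of_even (p : ℕ) [Fact p.Prime] (hp : Odd p) (k : ℕ) (hk0 : 0 < k)
    (hk : Even k) (lam : ℤ) (hlam0 : 0 ≤ lam) (hlam1 : lam < p) (l : ℤ)
    (hl : l = (-1) ^ (k * (p - 1) / 4) * (p : ℤ) ^ ((k - 2) / 2)) :
    (rho k lam p : ℤ) = (p : ℤ) ^ (k - 1) - l + (1 - |(legendreSym p lam : ℤ)|) * p * l ∧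
      (¬ (p : ℤ) ∣ lam → (rho k lam p : ℤ) = (p : ℤ) ^ (k - 1) - l) ∧
      (rho k 0 p : ℤ) = (p : ℤ) ^ (k - 1) + (p - 1) * l :=
  rho_prime_of_even_general p hp k hk0 hk lam l hl
end

section
/- For every positive integer k, regarding the count as a real number, ρ_{k,0}(4) = 4^{k−1} + 2^{3k/2 − 1} · cos(kπ/4). -/
open Complex Finset

lemma AddChar.map_sum_eq_prod {A M ι : Type*} [AddCommMonoid A] [CommMonoid M]
    (ψ : AddChar A M) (s : Finset ι) (a : ι → A) : ψ (∑ i ∈ s, a i) = ∏ i ∈ s, ψ (a i) :=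
  map_prod ψ.toMonoidHom (fun i => Multiplicative.ofAdd (a i)) s

theorem card_mul_card_sum_eq_sum_pow {R R' β ι : Type*} [CommRing R] [Fintype R]
    [DecidableEq R] [CommRing R'] [IsDomain R'] [Fintype β] [Fintype ι] [DecidableEq ι]
    {ψ : AddChar R R'} (hψ : ψ.IsPrimitive) (f : β → R) (c : R) :
    (Fintype.card R : R') * Nat.card {x : ι → β // ∑ i, f (x i) = c} =
      ∑ t : R, ψ (-(t * c)) * (∑ y, ψ (t * f y)) ^ Fintype.card ι := by
  classical
  -- orthogonality: `∑ₜ ψ (t * a) = #R` if `a = 0` and `0` otherwise, since `ψ` is primitive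
  have hfiber (x : ι → β) : ∑ t : R, ψ (-(t * c)) * ∏ i, ψ (t * f (x i)) =
      if ∑ i, f (x i) = c then (Fintype.card R : R') else 0 := by
    simp_rw [← AddChar.map_sum_eq_prod, ← AddChar.map_add_eq_mul, ← mul_sum, ← mul_neg,
      ← mul_add, neg_add_eq_sub, AddChar.sum_mulShift _ hψ, sub_eq_zero, Nat.cast_ite,
      Nat.cast_zero]
  calc (Fintype.card R : R') * Nat.card {x : ι → β // ∑ i, f (x i) = c}
      = ∑ x : ι → β, if ∑ i, f (x i) = c then (Fintype.card R : R') else 0 := by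
        rw [sum_ite, sum_const_zero, add_zero, sum_const, nsmul_eq_mul, mul_comm,
          Nat.card_eq_fintype_card, Fintype.card_subtype]
    _ = ∑ t : R, ψ (-(t * c)) * ∑ x : ι → β, ∏ i, ψ (t * f (x i)) := by
        simp_rw [← hfiber, mul_sum]
        exact sum_comm
    _ = ∑ t : R, ψ (-(t * c)) * (∑ y, ψ (t * f y)) ^ Fintype.card ι := by
        refine sum_congr rfl fun t _ => ?_
        rw [← card_univ, ← prod_const, Fintype.prod_sum]

lemma ZMod.sum_univ_four {M : Type*} [AddCommMonoid M] (g : ZMod 4 → M) :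
    ∑ y, g y = g 0 + g 1 + g 2 + g 3 :=
  Fin.sum_univ_four g

noncomputable abbrev iPowChar : AddChar (ZMod 4) ℂ := AddChar.zmodChar 4 I_pow_four

lemma iPowChar_apply (a : ZMod 4) : iPowChar a = I ^ a.val := rfl

lemma isPrimitive_iPowChar : iPowChar.IsPrimitive := by
  refine AddChar.zmod_char_primitive_of_eq_one_only_at_zero 4 _ fun a ha => ?_
  rw [iPowChar_apply] at ha
  fin_cases a
  · rfl
  all_goals exfalso; norm_num [ZMod.val, Complex.ext_iff] at ha

lemma sum_iPowChar_mul_sq (t : ZMod 4) :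
    ∑ y : ZMod 4, iPowChar (t * y ^ 2) = 2 + 2 * iPowChar t := by
  have h2 : (2 : ZMod 4) ^ 2 = 0 := by decide
  have h3 : (3 : ZMod 4) ^ 2 = 1 := by decide
  rw [ZMod.sum_univ_four, h2, h3, zero_pow two_ne_zero, one_pow, mul_zero, mul_one,
    AddChar.map_zero_eq_one]
  ring

lemma sum_two_add_two_mul_iPowChar_pow {k : ℕ} (hk : k ≠ 0) :
    ∑ t : ZMod 4, (2 + 2 * iPowChar t) ^ k = 4 ^ k + ((2 + 2 * I) ^ k + (2 - 2 * I) ^ k) := by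
  have hval1 : (1 : ZMod 4).val = 1 := rfl
  have hval2 : (2 : ZMod 4).val = 2 := rfl
  have hval3 : (3 : ZMod 4).val = 3 := rfl
  rw [ZMod.sum_univ_four, AddChar.map_zero_eq_one, iPowChar_apply 1, iPowChar_apply 2,
    iPowChar_apply 3, hval1, hval2, hval3, pow_one, I_sq, pow_three, I_mul_I,
    show (2 + 2 * -1 : ℂ) = 0 by norm_num, zero_pow hk]
  ring

lemma two_add_two_I_eq_polar :
    (2 + 2 * I : ℂ) = ((2 : ℝ) ^ (3 / 2 : ℝ) : ℝ) * exp ((Real.pi / 4 : ℝ) * I) := by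
  have h32 : (2 : ℝ) ^ (3 / 2 : ℝ) = 2 * Real.sqrt 2 := by
    rw [show (3 / 2 : ℝ) = 1 + 1 / 2 by norm_num, Real.rpow_add two_pos, Real.rpow_one,
      Real.sqrt_eq_rpow]
  have hsq : ((Real.sqrt 2 : ℝ) : ℂ) ^ 2 = 2 := by
    rw [← ofReal_pow, Real.sq_sqrt zero_le_two, ofReal_ofNat]
  rw [h32, exp_mul_I, ← ofReal_cos, ← ofReal_sin, Real.cos_pi_div_four, Real.sin_pi_div_four]
  push_cast
  linear_combination -(1 + I) * hsq

lemma re_two_add_two_I_pow (k : ℕ) :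
    ((2 + 2 * I : ℂ) ^ k).re = 2 ^ (3 * (k : ℝ) / 2) * Real.cos (k * Real.pi / 4) := by
  rw [two_add_two_I_eq_polar, mul_pow, ← exp_nat_mul, ← ofReal_pow, ← Real.rpow_natCast,
    ← Real.rpow_mul zero_le_two, re_ofReal_mul,
    show (k : ℂ) * ((Real.pi / 4 : ℝ) * I) = ((k * Real.pi / 4 : ℝ) : ℂ) * I by push_cast; ring,
    exp_ofReal_mul_I_re]
  ring_nf

lemma two_add_two_I_pow_add_conj (k : ℕ) :
    (2 + 2 * I : ℂ) ^ k + (2 - 2 * I) ^ k =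
      ((2 * (2 ^ (3 * (k : ℝ) / 2) * Real.cos (k * Real.pi / 4)) : ℝ) : ℂ) := by
  have hconj : (2 - 2 * I : ℂ) = starRingEnd ℂ (2 + 2 * I) := by
    apply Complex.ext <;> simp
  rw [hconj, ← map_pow, add_conj, re_two_add_two_I_pow]

lemma four_mul_rho_zero_four {k : ℕ} (hk : k ≠ 0) :
    4 * (rho k 0 4 : ℝ) = 4 ^ k + 2 * (2 ^ (3 * (k : ℝ) / 2) * Real.cos (k * Real.pi / 4)) := by
  have hcount := card_mul_card_sum_eq_sum_pow (ι := Fin k) isPrimitive_iPowChar (fun y => y ^ 2)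
    ((0 : ℤ) : ZMod 4)
  simp only [Int.cast_zero, mul_zero, neg_zero, AddChar.map_zero_eq_one, one_mul,
    sum_iPowChar_mul_sq, ZMod.card, Fintype.card_fin, sum_two_add_two_mul_iPowChar_pow hk,
    two_add_two_I_pow_add_conj] at hcount
  exact_mod_cast hcount

/-- `ρ_{k,0}(4) = 4^{k−1} + 2^{3k/2 − 1} · cos(kπ/4)`. -/
theorem rho_zero_four (k : ℕ) (hk : 0 < k) :
    (rho k 0 4 : ℝ) =
      4 ^ (k - 1) + 2 ^ (3 * (k : ℝ) / 2 - 1) * Real.cos (k * Real.pi / 4) := by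
  have h4 := four_mul_rho_zero_four hk.ne'
  obtain ⟨m, rfl⟩ : ∃ m, k = m + 1 := ⟨k - 1, by omega⟩
  rw [Nat.add_sub_cancel, Real.rpow_sub two_pos, Real.rpow_one]
  rw [pow_succ] at h4
  linarith
end

section
/- For every positive integer k, regarding the count as a real number, ρ_{k,0}(8) = 8^{k−1} + 2^{2k−2} · cos(kπ/4) + 2^{5k/2 − 2} · cos(kπ/4) + 2^{2k−2} · cos(3kπ/4). -/
def T : ℕ → ZMod 8 → ℤ
  | 0, a => if a = 0 then 1 else 0
  | (k+1), a => 2 * T k a + 4 * T k (a-1) + 2 * T k (a-4)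

noncomputable def N (k : ℕ) (a : ZMod 8) : ℕ :=
  Nat.card {x : Fin k → ZMod 8 // ∑ i, x i ^ 2 = a}

def splitEquiv (k : ℕ) (a : ZMod 8) :
    {x : Fin (k+1) → ZMod 8 // ∑ i, x i ^ 2 = a} ≃
      Σ y : ZMod 8, {x : Fin k → ZMod 8 // ∑ i, x i ^ 2 = a - y ^ 2} where
  toFun f := ⟨f.1 0, ⟨fun i => f.1 i.succ, by
    have h := f.2
    rw [Fin.sum_univ_succ] at h
    rw [eq_sub_iff_add_eq, add_comm]
    exact h⟩⟩
  invFun p := ⟨Fin.cons p.1 p.2.1, by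
    rw [Fin.sum_univ_succ]
    simp only [Fin.cons_zero, Fin.cons_succ]
    rw [p.2.2]
    ring⟩
  left_inv f := by
    ext i
    refine Fin.cases ?_ ?_ i <;> simp
  right_inv p := by
    ext <;> simp

lemma sum_eval (g : ZMod 8 → ℕ) (a : ZMod 8) :
    ∑ y : ZMod 8, g (a - y ^ 2) = 2 * g a + 4 * g (a-1) + 2 * g (a-4) := by
  have h : (Finset.univ : Finset (ZMod 8)) = {0,1,2,3,4,5,6,7} := by decide
  rw [h]
  rw [Finset.sum_insert (by decide), Finset.sum_insert (by decide),
    Finset.sum_insert (by decide), Finset.sum_insert (by decide),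
    Finset.sum_insert (by decide), Finset.sum_insert (by decide),
    Finset.sum_insert (by decide), Finset.sum_singleton]
  simp only [show ((0:ZMod 8) ^ 2) = 0 from by decide,
    show ((1:ZMod 8) ^ 2) = 1 from by decide,
    show ((2:ZMod 8) ^ 2) = 4 from by decide,
    show ((3:ZMod 8) ^ 2) = 1 from by decide,
    show ((4:ZMod 8) ^ 2) = 0 from by decide,
    show ((5:ZMod 8) ^ 2) = 1 from by decide,
    show ((6:ZMod 8) ^ 2) = 4 from by decide,
    show ((7:ZMod 8) ^ 2) = 1 from by decide, sub_zero]
  ring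

lemma N_succ (k : ℕ) (a : ZMod 8) :
    N (k+1) a = 2 * N k a + 4 * N k (a-1) + 2 * N k (a-4) := by
  rw [← sum_eval (N k) a, N, Nat.card_congr (splitEquiv k a),
    Nat.card_eq_fintype_card, Fintype.card_sigma]
  exact Finset.sum_congr rfl fun y _ => by rw [N, Nat.card_eq_fintype_card]

lemma N_eq_T : ∀ k a, (N k a : ℤ) = T k a := by
  intro k
  induction k with
  | zero =>
    intro a
    rcases eq_or_ne a 0 with rfl | h
    · rw [N, Nat.card_eq_fintype_card]
      simp [T]
    · rw [N, Nat.card_eq_fintype_card]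
      simp [T, h]
      rw [Fintype.card_eq_zero_iff]
      exact ⟨fun x => h x.2.symm⟩
  | succ k ih =>
    intro a
    rw [N_succ]
    push_cast
    rw [ih a, ih (a-1), ih (a-4)]
    rfl

lemma T_rec : ∀ k, ∀ a : ZMod 8,
    T (k+10) a = 8 * T (k+9) a - 1280 * T (k+6) a + 10240 * T (k+5) a
      - 262144 * T (k+2) a + 2097152 * T (k+1) a := by
  intro k
  induction k with
  | zero => decide
  | succ k ih =>
    intro a
    have E10 : T (k+1+10) a = 2 * T (k+10) a + 4 * T (k+10) (a-1) + 2 * T (k+10) (a-4) := rfl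
    have E9 : T (k+1+9) a = 2 * T (k+9) a + 4 * T (k+9) (a-1) + 2 * T (k+9) (a-4) := rfl
    have E6 : T (k+1+6) a = 2 * T (k+6) a + 4 * T (k+6) (a-1) + 2 * T (k+6) (a-4) := rfl
    have E5 : T (k+1+5) a = 2 * T (k+5) a + 4 * T (k+5) (a-1) + 2 * T (k+5) (a-4) := rfl
    have E2 : T (k+1+2) a = 2 * T (k+2) a + 4 * T (k+2) (a-1) + 2 * T (k+2) (a-4) := rfl
    have E1 : T (k+1+1) a = 2 * T (k+1) a + 4 * T (k+1) (a-1) + 2 * T (k+1) (a-4) := rfl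
    linear_combination E10 - 8*E9 + 1280*E6 - 10240*E5 + 262144*E2 - 2097152*E1
      + 2 * ih a + 4 * ih (a-1) + 2 * ih (a-4)


noncomputable def c8 : ℕ → ℝ
  | 0 => 1
  | 1 => Real.sqrt 2 / 2
  | 2 => 0
  | 3 => -(Real.sqrt 2 / 2)
  | 4 => -1
  | 5 => -(Real.sqrt 2 / 2)
  | 6 => 0
  | _ => Real.sqrt 2 / 2

lemma cos_table : ∀ n : ℕ, Real.cos ((n : ℝ) * Real.pi / 4) = c8 (n % 8) := by
  have base : ∀ n : ℕ, n < 8 → Real.cos ((n : ℝ) * Real.pi / 4) = c8 (n % 8) := by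
    intro n hn
    interval_cases n
    · simp [c8]
    · simpa [c8] using Real.cos_pi_div_four
    · rw [show ((2:ℕ):ℝ) * Real.pi / 4 = Real.pi / 2 by push_cast; ring]
      simp [c8]
    · rw [show ((3:ℕ):ℝ) * Real.pi / 4 = Real.pi - Real.pi / 4 by push_cast; ring,
        Real.cos_pi_sub, Real.cos_pi_div_four]
      norm_num [c8]
    · rw [show ((4:ℕ):ℝ) * Real.pi / 4 = Real.pi by push_cast; ring]
      simp [c8]
    · rw [show ((5:ℕ):ℝ) * Real.pi / 4 = Real.pi / 4 + Real.pi by push_cast; ring,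
        Real.cos_add_pi, Real.cos_pi_div_four]
      norm_num [c8]
    · rw [show ((6:ℕ):ℝ) * Real.pi / 4 = Real.pi / 2 + Real.pi by push_cast; ring,
        Real.cos_add_pi]
      simp [c8]
    · rw [show ((7:ℕ):ℝ) * Real.pi / 4 = (Real.pi - Real.pi / 4) + Real.pi by push_cast; ring,
        Real.cos_add_pi, Real.cos_pi_sub, Real.cos_pi_div_four]
      norm_num [c8]
  intro n
  induction n using Nat.strong_induction_on with
  | _ n ih =>
    rcases lt_or_ge n 8 with h | h
    · exact base n h
    · obtain ⟨m, rfl⟩ : ∃ m, n = m + 8 := ⟨n - 8, by omega⟩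
      rw [show ((m + 8 : ℕ):ℝ) * Real.pi / 4 = (m:ℝ) * Real.pi / 4 + 2 * Real.pi by
          push_cast; ring, Real.cos_add_two_pi, ih m (by omega),
        show (m + 8) % 8 = m % 8 by omega]

noncomputable def Aq (k : ℕ) : ℝ := 8 ^ k / 8
noncomputable def Bq (k : ℕ) : ℝ := 4 ^ k / 4 * Real.cos ((k : ℝ) * Real.pi / 4)
noncomputable def Cq (k : ℕ) : ℝ := 2 ^ (5 * (k : ℝ) / 2 - 2) * Real.cos ((k : ℝ) * Real.pi / 4)
noncomputable def Dq (k : ℕ) : ℝ := 4 ^ k / 4 * Real.cos (((3 * k : ℕ) : ℝ) * Real.pi / 4)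
noncomputable def Fq (k : ℕ) : ℝ := Aq k + Bq k + Cq k + Dq k

lemma Aq_rec (k : ℕ) : Aq (k + 1) = 8 * Aq k := by
  simp only [Aq, pow_succ]; ring

lemma cos_succ4 (k : ℕ) : Real.cos (((k:ℕ) + 4 : ℝ) * Real.pi / 4) = -Real.cos ((k:ℝ) * Real.pi / 4) := by
  rw [show ((k:ℝ) + 4) * Real.pi / 4 = (k:ℝ) * Real.pi / 4 + Real.pi by ring, Real.cos_add_pi]

lemma Bq_rec (k : ℕ) : Bq (k + 4) = -256 * Bq k := by
  simp only [Bq]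
  push_cast
  rw [cos_succ4]
  ring

lemma Cq_rec (k : ℕ) : Cq (k + 4) = -1024 * Cq k := by
  simp only [Cq]
  push_cast
  rw [cos_succ4,
    show 5 * ((k:ℝ) + 4) / 2 - 2 = (5 * (k:ℝ) / 2 - 2) + ((10:ℕ):ℝ) by push_cast; ring,
    Real.rpow_add (by norm_num : (0:ℝ) < 2), Real.rpow_natCast]
  norm_num
  ring

lemma Dq_rec (k : ℕ) : Dq (k + 4) = -256 * Dq k := by
  simp only [Dq]
  push_cast
  rw [show (3 * ((k:ℝ) + 4)) * Real.pi / 4 = ((3*(k:ℝ)) * Real.pi / 4 + Real.pi) + 2 * Real.pi by ring,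
    Real.cos_add_two_pi, Real.cos_add_pi]
  ring

lemma Fq_rec (m : ℕ) : Fq (m + 10) = 8 * Fq (m + 9) - 1280 * Fq (m + 6) + 10240 * Fq (m + 5)
    - 262144 * Fq (m + 2) + 2097152 * Fq (m + 1) := by
  have a9 : Aq (m+10) = 8 * Aq (m+9) := Aq_rec (m+9)
  have a5 : Aq (m+6) = 8 * Aq (m+5) := Aq_rec (m+5)
  have a1 : Aq (m+2) = 8 * Aq (m+1) := Aq_rec (m+1)
  have b6 : Bq (m+10) = -256 * Bq (m+6) := Bq_rec (m+6)
  have b5 : Bq (m+9) = -256 * Bq (m+5) := Bq_rec (m+5)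
  have b2 : Bq (m+6) = -256 * Bq (m+2) := Bq_rec (m+2)
  have b1 : Bq (m+5) = -256 * Bq (m+1) := Bq_rec (m+1)
  have c6 : Cq (m+10) = -1024 * Cq (m+6) := Cq_rec (m+6)
  have c5 : Cq (m+9) = -1024 * Cq (m+5) := Cq_rec (m+5)
  have c2 : Cq (m+6) = -1024 * Cq (m+2) := Cq_rec (m+2)
  have c1 : Cq (m+5) = -1024 * Cq (m+1) := Cq_rec (m+1)
  have d6 : Dq (m+10) = -256 * Dq (m+6) := Dq_rec (m+6)
  have d5 : Dq (m+9) = -256 * Dq (m+5) := Dq_rec (m+5)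
  have d2 : Dq (m+6) = -256 * Dq (m+2) := Dq_rec (m+2)
  have d1 : Dq (m+5) = -256 * Dq (m+1) := Dq_rec (m+1)
  simp only [Fq]
  linear_combination a9 + 1280 * a5 + 262144 * a1
    + b6 - 8 * b5 + 1024 * b2 - 8192 * b1
    + c6 - 8 * c5 + 256 * c2 - 2048 * c1
    + d6 - 8 * d5 + 1024 * d2 - 8192 * d1

lemma rpow_half (m : ℕ) : (2:ℝ) ^ ((m:ℝ) + 1/2) = 2 ^ m * Real.sqrt 2 := by
  rw [Real.rpow_add (by norm_num : (0:ℝ) < 2), Real.rpow_natCast, Real.sqrt_eq_rpow]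

lemma s2 : Real.sqrt 2 * Real.sqrt 2 = 2 := Real.mul_self_sqrt (by norm_num)

lemma baseF_1 : (2 : ℝ) = Fq 1 := by
  simp only [Fq, Aq, Bq, Cq, Dq]
  rw [cos_table 1, cos_table (3*1),
    show 5 * ((1:ℕ):ℝ) / 2 - 2 = ((0:ℕ):ℝ) + 1/2 by push_cast; norm_num, rpow_half 0]
  norm_num [c8]
  linear_combination (-1/2 : ℝ) * s2

lemma baseF_2 : (8 : ℝ) = Fq 2 := by
  simp only [Fq, Aq, Bq, Cq, Dq]
  rw [cos_table 2, cos_table (3*2)]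
  norm_num [c8]

lemma baseF_3 : (32 : ℝ) = Fq 3 := by
  simp only [Fq, Aq, Bq, Cq, Dq]
  rw [cos_table 3, cos_table (3*3),
    show 5 * ((3:ℕ):ℝ) / 2 - 2 = ((5:ℕ):ℝ) + 1/2 by push_cast; norm_num, rpow_half 5]
  norm_num [c8]
  linear_combination (16 : ℝ) * s2

lemma baseF_4 : (128 : ℝ) = Fq 4 := by
  simp only [Fq, Aq, Bq, Cq, Dq]
  rw [cos_table 4, cos_table (3*4),
    show 5 * ((4:ℕ):ℝ) / 2 - 2 = ((8:ℕ):ℝ) by push_cast; norm_num, Real.rpow_natCast]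
  norm_num [c8]

lemma baseF_5 : (3072 : ℝ) = Fq 5 := by
  simp only [Fq, Aq, Bq, Cq, Dq]
  rw [cos_table 5, cos_table (3*5),
    show 5 * ((5:ℕ):ℝ) / 2 - 2 = ((10:ℕ):ℝ) + 1/2 by push_cast; norm_num, rpow_half 10]
  norm_num [c8]
  linear_combination (512 : ℝ) * s2

lemma baseF_6 : (32768 : ℝ) = Fq 6 := by
  simp only [Fq, Aq, Bq, Cq, Dq]
  rw [cos_table 6, cos_table (3*6)]
  norm_num [c8]

lemma baseF_7 : (294912 : ℝ) = Fq 7 := by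
  simp only [Fq, Aq, Bq, Cq, Dq]
  rw [cos_table 7, cos_table (3*7),
    show 5 * ((7:ℕ):ℝ) / 2 - 2 = ((15:ℕ):ℝ) + 1/2 by push_cast; norm_num, rpow_half 15]
  norm_num [c8]
  linear_combination (-16384 : ℝ) * s2

lemma baseF_8 : (2392064 : ℝ) = Fq 8 := by
  simp only [Fq, Aq, Bq, Cq, Dq]
  rw [cos_table 8, cos_table (3*8),
    show 5 * ((8:ℕ):ℝ) / 2 - 2 = ((18:ℕ):ℝ) by push_cast; norm_num, Real.rpow_natCast]
  norm_num [c8]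

lemma baseF_9 : (17825792 : ℝ) = Fq 9 := by
  simp only [Fq, Aq, Bq, Cq, Dq]
  rw [cos_table 9, cos_table (3*9),
    show 5 * ((9:ℕ):ℝ) / 2 - 2 = ((20:ℕ):ℝ) + 1/2 by push_cast; norm_num, rpow_half 20]
  norm_num [c8]
  linear_combination (-524288 : ℝ) * s2

lemma baseF_10 : (134217728 : ℝ) = Fq 10 := by
  simp only [Fq, Aq, Bq, Cq, Dq]
  rw [cos_table 10, cos_table (3*10)]
  norm_num [c8]


lemma T_eq_F : ∀ k : ℕ, 1 ≤ k → ((T k (0 : ZMod 8) : ℤ) : ℝ) = Fq k := by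
  intro k
  induction k using Nat.strong_induction_on with
  | _ k ih =>
    intro hk
    by_cases h : k ≤ 10
    · interval_cases k
      · rw [show T 1 (0:ZMod 8) = 2 from by decide]; exact_mod_cast baseF_1
      · rw [show T 2 (0:ZMod 8) = 8 from by decide]; exact_mod_cast baseF_2
      · rw [show T 3 (0:ZMod 8) = 32 from by decide]; exact_mod_cast baseF_3
      · rw [show T 4 (0:ZMod 8) = 128 from by decide]; exact_mod_cast baseF_4
      · rw [show T 5 (0:ZMod 8) = 3072 from by decide]; exact_mod_cast baseF_5
      · rw [show T 6 (0:ZMod 8) = 32768 from by decide]; exact_mod_cast baseF_6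
      · rw [show T 7 (0:ZMod 8) = 294912 from by decide]; exact_mod_cast baseF_7
      · rw [show T 8 (0:ZMod 8) = 2392064 from by decide]; exact_mod_cast baseF_8
      · rw [show T 9 (0:ZMod 8) = 17825792 from by decide]; exact_mod_cast baseF_9
      · rw [show T 10 (0:ZMod 8) = 134217728 from by decide]; exact_mod_cast baseF_10
    · obtain ⟨m, rfl⟩ : ∃ m, k = m + 10 := ⟨k - 10, by omega⟩
      have h9 := ih (m+9) (by omega) (by omega)
      have h6 := ih (m+6) (by omega) (by omega)
      have h5 := ih (m+5) (by omega) (by omega)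
      have h2 := ih (m+2) (by omega) (by omega)
      have h1 := ih (m+1) (by omega) (by omega)
      calc ((T (m+10) (0:ZMod 8) : ℤ) : ℝ)
          = ((8 * T (m+9) (0:ZMod 8) - 1280 * T (m+6) (0:ZMod 8) + 10240 * T (m+5) (0:ZMod 8)
              - 262144 * T (m+2) (0:ZMod 8) + 2097152 * T (m+1) (0:ZMod 8) : ℤ) : ℝ) := by
            rw [T_rec m (0:ZMod 8)]
        _ = 8 * ((T (m+9) (0:ZMod 8) : ℤ) : ℝ) - 1280 * ((T (m+6) (0:ZMod 8) : ℤ) : ℝ)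
              + 10240 * ((T (m+5) (0:ZMod 8) : ℤ) : ℝ) - 262144 * ((T (m+2) (0:ZMod 8) : ℤ) : ℝ)
              + 2097152 * ((T (m+1) (0:ZMod 8) : ℤ) : ℝ) := by push_cast; ring
        _ = 8 * Fq (m+9) - 1280 * Fq (m+6) + 10240 * Fq (m+5)
              - 262144 * Fq (m+2) + 2097152 * Fq (m+1) := by rw [h9, h6, h5, h2, h1]
        _ = Fq (m+10) := (Fq_rec m).symm

/-- `ρ_{k,0}(8) = 8^{k−1} + 2^{2k−2}cos(kπ/4) + 2^{5k/2−2}cos(kπ/4) + 2^{2k−2}cos(3kπ/4)`. -/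
theorem rho_zero_eight (k : ℕ) (hk : 0 < k) :
    (rho k 0 8 : ℝ) =
      8 ^ (k - 1) + 2 ^ (2 * k - 2) * Real.cos (k * Real.pi / 4)
        + 2 ^ (5 * (k : ℝ) / 2 - 2) * Real.cos (k * Real.pi / 4)
        + 2 ^ (2 * k - 2) * Real.cos (3 * k * Real.pi / 4) := by
  have hN : rho k 0 8 = N k 0 := by
    rw [rho, N]; norm_num
  have hT : ((rho k 0 8 : ℕ) : ℝ) = ((T k (0 : ZMod 8) : ℤ) : ℝ) := by
    rw [hN, ← N_eq_T k 0]; norm_num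
  rw [hT, T_eq_F k hk]
  have e1 : (8:ℝ) ^ (k-1) = 8 ^ k / 8 := by
    rw [eq_div_iff (by norm_num : (8:ℝ) ≠ 0), ← pow_succ, show k-1+1 = k from by omega]
  have e2 : (2:ℝ) ^ (2*k-2) = 4 ^ k / 4 := by
    rw [show (4:ℝ) = 2^2 from by norm_num, ← pow_mul,
      eq_div_iff (by norm_num : ((2:ℝ)^2) ≠ 0), ← pow_add, show 2*k-2+2 = 2*k from by omega]
  have e3 : Real.cos (((3 * k : ℕ) : ℝ) * Real.pi / 4) = Real.cos (3 * (k:ℝ) * Real.pi / 4) := by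
    push_cast; ring_nf
  rw [Fq, Aq, Bq, Cq, Dq, e1, e2, e3]
end

section
/- Let p be an odd prime, k a positive integer, s ≥ 1 an integer, and λ an integer with 0 ≤ λ < p^s. Then ρ^(1)_{k,λ}(p^s) = p^{(s−1)(k−1)} · ρ^(1)_{k, λ mod p}(p). -/
/-- `rho1 k lam p s` is the number of `k`-tuples `(x₁,…,x_k) ∈ (ℤ/p^sℤ)^k` with
`x₁² + ⋯ + x_k² ≡ lam (mod p^s)` such that `p ∤ xᵢ` for at least one index `i`. -/
noncomputable def rho1 (k : ℕ) (lam : ℤ) (p s : ℕ) : ℕ :=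
  Nat.card {x : Fin k → ZMod (p ^ s) //
    (∑ i, x i ^ 2 = (lam : ZMod (p ^ s))) ∧ ∃ i, ¬ (p : ZMod (p ^ s)) ∣ x i}

lemma cast_mul_pow_eq_iff (p : ℕ) (hp : p ≠ 0) (s a b : ℕ) :
    ((p ^ s * a : ℕ) : ZMod (p ^ (s + 1))) = ((p ^ s * b : ℕ) : ZMod (p ^ (s + 1))) ↔
      a ≡ b [MOD p] := by
  rw [ZMod.natCast_eq_natCast_iff]
  unfold Nat.ModEq
  rw [pow_succ, Nat.mul_mod_mul_left, Nat.mul_mod_mul_left]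
  exact ⟨fun h => Nat.eq_of_mul_eq_mul_left (Nat.pos_of_ne_zero (pow_ne_zero _ hp)) h,
    fun h => by rw [h]⟩

lemma natCast_val_self {m : ℕ} [NeZero m] (w : ZMod m) : ((w.val : ℕ) : ZMod m) = w := by
  simp [ZMod.natCast_val, ZMod.cast_id]

lemma pdvd_iff (p m : ℕ) (hp : p ≠ 0) (hm : m ≠ 0) (z : ZMod (p ^ m)) :
    (p : ZMod (p ^ m)) ∣ z ↔ (p : ℕ) ∣ z.val := by
  haveI : NeZero (p ^ m) := ⟨pow_ne_zero _ hp⟩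
  constructor
  · rintro ⟨w, rfl⟩
    have h1 : ((((p : ZMod (p ^ m)) * w).val : ℕ) : ZMod (p ^ m)) = ((p * w.val : ℕ) : ZMod (p ^ m)) := by
      rw [natCast_val_self]
      push_cast
      rw [natCast_val_self]
    rw [ZMod.natCast_eq_natCast_iff] at h1
    have h2 := h1.of_dvd (dvd_pow_self p hm)
    have := h2.trans (Nat.modEq_zero_iff_dvd.mpr ⟨w.val, rfl⟩)
    exact Nat.modEq_zero_iff_dvd.mp this
  · rintro ⟨c0, hc0⟩
    exact ⟨(c0 : ZMod (p ^ m)), by rw [← natCast_val_self z, hc0]; push_cast; ring⟩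

lemma card_linear_eq (p : ℕ) [Fact p.Prime] (k : ℕ) (c : Fin k → ZMod p) (j : Fin k)
    (hc : c j ≠ 0) (b : ZMod p) :
    Nat.card {t : Fin k → ZMod p // ∑ i, c i * t i = b} = p ^ (k - 1) := by
  classical
  set L : (Fin k → ZMod p) →ₗ[ZMod p] ZMod p := ∑ i, (c i) • LinearMap.proj i with hL
  have hLapp : ∀ t, L t = ∑ i, c i * t i := by
    intro t
    simp [hL, LinearMap.sum_apply, smul_eq_mul]
  have hsingle : ∀ v : ZMod p, L (Pi.single j v) = c j * v := by
    intro v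
    rw [hLapp]
    simp [Pi.single_apply, mul_ite, Finset.sum_ite_eq']
  have hsurj : Function.Surjective L := by
    intro v
    exact ⟨Pi.single j ((c j)⁻¹ * v), by rw [hsingle, ← mul_assoc, mul_inv_cancel₀ hc, one_mul]⟩
  have ht0 : L (Pi.single j ((c j)⁻¹ * b)) = b := by
    rw [hsingle, ← mul_assoc, mul_inv_cancel₀ hc, one_mul]
  set t₀ : Fin k → ZMod p := Pi.single j ((c j)⁻¹ * b) with ht0def
  have e : {t : Fin k → ZMod p // ∑ i, c i * t i = b} ≃ LinearMap.ker L :=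
    { toFun := fun t => ⟨t.1 - t₀, by
        rw [LinearMap.mem_ker, map_sub, ht0, hLapp, t.2, sub_self]⟩
      invFun := fun t => ⟨t.1 + t₀, by
        rw [← hLapp, map_add, ht0, LinearMap.mem_ker.mp t.2, zero_add]⟩
      left_inv := fun t => by ext; simp
      right_inv := fun t => by ext; simp }
  rw [Nat.card_congr e]
  have hrange : LinearMap.range L = ⊤ := LinearMap.range_eq_top.mpr hsurj
  have hrk : Module.finrank (ZMod p) (LinearMap.range L) + Module.finrank (ZMod p) (LinearMap.ker L)
      = Module.finrank (ZMod p) (Fin k → ZMod p) := LinearMap.finrank_range_add_finrank_ker L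
  rw [hrange] at hrk
  have h1 : Module.finrank (ZMod p) (⊤ : Submodule (ZMod p) (ZMod p)) = 1 := by
    simp [finrank_top]
  have h2 : Module.finrank (ZMod p) (Fin k → ZMod p) = k := by
    simp [Module.finrank_pi]
  rw [h1, h2] at hrk
  have hker : Module.finrank (ZMod p) (LinearMap.ker L) = k - 1 := by omega
  haveI : Fintype (LinearMap.ker L) := Fintype.ofFinite _
  rw [Nat.card_eq_fintype_card, Module.card_eq_pow_finrank (K := ZMod p), hker, ZMod.card]

lemma rho1_step (p : ℕ) (hp : p.Prime) (hodd : Odd p) (k : ℕ) (s : ℕ) (hs : 1 ≤ s) (lam : ℤ) :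
    rho1 k lam p (s + 1) = p ^ (k - 1) * rho1 k lam p s := by
  classical
  unfold rho1
  haveI : Fact p.Prime := ⟨hp⟩
  have hp0 : p ≠ 0 := hp.pos.ne'
  haveI hNZ : NeZero (p ^ (s + 1)) := ⟨pow_ne_zero _ hp0⟩
  haveI hnZ : NeZero (p ^ s) := ⟨pow_ne_zero _ hp0⟩
  set π : ZMod (p ^ (s + 1)) →+* ZMod (p ^ s) :=
    ZMod.castHom (pow_dvd_pow p s.le_succ) (ZMod (p ^ s)) with hπ
  -- value of π
  have hπval : ∀ x : ZMod (p ^ (s + 1)), (π x).val = x.val % p ^ s := by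
    intro x
    conv_lhs => rw [← natCast_val_self x]
    rw [map_natCast, ZMod.val_natCast]
  -- ψ
  set ψ : ZMod p → ZMod (p ^ (s + 1)) := fun t => ((p ^ s * t.val : ℕ) : ZMod (p ^ (s + 1)))
    with hψ
  have hψinj : Function.Injective ψ := by
    intro t t' h
    rw [hψ] at h
    simp only at h
    rw [cast_mul_pow_eq_iff p hp0] at h
    have : ((t.val : ℕ) : ZMod p) = ((t'.val : ℕ) : ZMod p) := (ZMod.natCast_eq_natCast_iff _ _ _).mpr h
    rwa [natCast_val_self, natCast_val_self] at this
  have hψadd : ∀ t t', ψ (t + t') = ψ t + ψ t' := by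
    intro t t'
    rw [hψ]
    simp only
    have h1 : ((p ^ s * (t + t').val : ℕ) : ZMod (p ^ (s + 1)))
        = ((p ^ s * (t.val + t'.val) : ℕ) : ZMod (p ^ (s + 1))) := by
      rw [cast_mul_pow_eq_iff p hp0]
      rw [ZMod.val_add]
      exact Nat.mod_modEq _ _
    rw [h1]
    push_cast
    ring
  set Ψ : ZMod p →+ ZMod (p ^ (s + 1)) := AddMonoidHom.mk' ψ hψadd with hΨ
  have hπψ : ∀ t, π (ψ t) = 0 := by
    intro t
    rw [hψ]
    simp only
    rw [map_natCast, ZMod.natCast_eq_zero_iff]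
    exact dvd_mul_right _ _
  have hψsq : ∀ t t', ψ t * ψ t' = 0 := by
    intro t t'
    rw [hψ]
    simp only
    rw [← Nat.cast_mul, ZMod.natCast_eq_zero_iff]
    have h2 : p ^ (s + 1) ∣ p ^ s * p ^ s := by
      rw [← pow_add]
      exact pow_dvd_pow p (by omega)
    exact h2.trans (mul_dvd_mul (dvd_mul_right _ _) (dvd_mul_right _ _))
  have hmulψ : ∀ (c : ZMod (p ^ (s + 1))) t, c * ψ t = ψ ((c.val : ZMod p) * t) := by
    intro c t
    have h1 : c * ψ t = ((c.val * (p ^ s * t.val) : ℕ) : ZMod (p ^ (s + 1))) := by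
      conv_lhs => rw [← natCast_val_self c]
      rw [hψ]
      push_cast
      ring
    rw [h1]
    have h2 : (c.val * (p ^ s * t.val) : ℕ) = p ^ s * (c.val * t.val) := by ring
    rw [h2, hψ]
    simp only
    rw [cast_mul_pow_eq_iff p hp0]
    rw [← ZMod.natCast_eq_natCast_iff]
    rw [natCast_val_self]
    push_cast
    rw [natCast_val_self]
  -- divisibility transfer
  have hdvd1 : ∀ x : ZMod (p ^ (s + 1)), (p : ZMod (p ^ (s + 1))) ∣ x ↔ (p : ZMod (p ^ s)) ∣ π x := by
    intro x
    rw [pdvd_iff p (s + 1) hp0 (by omega), pdvd_iff p s hp0 (by omega), hπval]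
    rw [Nat.dvd_mod_iff (dvd_pow_self p (by omega : s ≠ 0))]
  -- 2 is invertible mod p
  have h2ne : (2 : ZMod p) ≠ 0 := by
    have hp2 : p ≠ 2 := by
      rintro rfl
      exact (by norm_num : ¬ Odd 2) hodd
    intro h
    have : ((2 : ℕ) : ZMod p) = 0 := by exact_mod_cast h
    have hdvd := (ZMod.natCast_eq_zero_iff 2 p).mp this
    exact hp2 ((Nat.prime_dvd_prime_iff_eq hp Nat.prime_two).mp hdvd)
  have hval1 : ∀ w : ZMod (p ^ (s + 1)), ((w.val : ℕ) : ZMod p)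
      = (ZMod.castHom (dvd_pow_self p (Nat.succ_ne_zero s)) (ZMod p)) w := by
    intro w
    conv_rhs => rw [← natCast_val_self w]
    rw [map_natCast]
  -- membership transfer along π
  have hΦmem : ∀ x : {x : Fin k → ZMod (p ^ (s + 1)) //
      (∑ i, x i ^ 2 = (lam : ZMod (p ^ (s + 1)))) ∧ ∃ i, ¬ (p : ZMod (p ^ (s + 1))) ∣ x i},
      (∑ i, π (x.1 i) ^ 2 = (lam : ZMod (p ^ s))) ∧ ∃ i, ¬ (p : ZMod (p ^ s)) ∣ π (x.1 i) := by
    intro x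
    obtain ⟨hxsum, i, hxi⟩ := x.2
    refine ⟨?_, ⟨i, fun h => hxi ((hdvd1 _).mpr h)⟩⟩
    have : ∑ i, π (x.1 i) ^ 2 = π (∑ i, x.1 i ^ 2) := by
      rw [map_sum]
      simp only [map_pow]
    rw [this, hxsum, map_intCast]
  let Φ : {x : Fin k → ZMod (p ^ (s + 1)) //
      (∑ i, x i ^ 2 = (lam : ZMod (p ^ (s + 1)))) ∧ ∃ i, ¬ (p : ZMod (p ^ (s + 1))) ∣ x i} →
      {x : Fin k → ZMod (p ^ s) //
      (∑ i, x i ^ 2 = (lam : ZMod (p ^ s))) ∧ ∃ i, ¬ (p : ZMod (p ^ s)) ∣ x i} :=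
    fun x => ⟨fun i => π (x.1 i), hΦmem x⟩
  have hfib : ∀ y, Nat.card {x // Φ x = y} = p ^ (k - 1) := by
    intro y
    set yL : Fin k → ZMod (p ^ (s + 1)) := fun i => (((y.1 i).val : ℕ) : ZMod (p ^ (s + 1)))
      with hyL
    have hπyL : ∀ i, π (yL i) = y.1 i := by
      intro i
      rw [hyL]
      simp only
      rw [map_natCast, natCast_val_self]
    have hdecomp : ∀ x : ZMod (p ^ (s + 1)), ∀ i, π x = y.1 i →
        x = yL i + ψ (((x.val / p ^ s : ℕ) : ZMod p)) := by
      intro x i hx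
      have hv : (y.1 i).val = x.val % p ^ s := by rw [← hx, hπval]
      have h1 : ψ (((x.val / p ^ s : ℕ) : ZMod p))
          = ((p ^ s * (x.val / p ^ s) : ℕ) : ZMod (p ^ (s + 1))) := by
        rw [hψ]
        simp only
        rw [cast_mul_pow_eq_iff p hp0, ZMod.val_natCast]
        exact Nat.mod_modEq _ _
      have h2 : yL i = ((x.val % p ^ s : ℕ) : ZMod (p ^ (s + 1))) := by rw [hyL]; simp only [hv]
      rw [h1, h2, ← Nat.cast_add, Nat.mod_add_div]
      exact (natCast_val_self x).symm
    set A : ZMod (p ^ (s + 1)) := (lam : ZMod (p ^ (s + 1))) - ∑ i, yL i ^ 2 with hA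
    have hπA : π A = 0 := by
      rw [hA, map_sub, map_intCast, map_sum]
      simp only [map_pow, hπyL]
      rw [y.2.1]
      exact sub_self _
    have hdvdA : p ^ s ∣ A.val := by
      have h1 := hπval A
      rw [hπA, ZMod.val_zero] at h1
      exact Nat.dvd_of_mod_eq_zero h1.symm
    set a : ZMod p := ((A.val / p ^ s : ℕ) : ZMod p) with ha
    have hAa : A = ψ a := by
      have h1 : ψ a = ((p ^ s * (A.val / p ^ s) : ℕ) : ZMod (p ^ (s + 1))) := by
        rw [hψ, ha]
        simp only
        rw [cast_mul_pow_eq_iff p hp0, ZMod.val_natCast]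
        exact Nat.mod_modEq _ _
      rw [h1, Nat.mul_div_cancel' hdvdA, natCast_val_self]
    set d : Fin k → ZMod p := fun i => (2 : ZMod p) * (((y.1 i).val : ℕ) : ZMod p) with hd
    have hdψ : ∀ i t, (2 * yL i) * ψ t = ψ (d i * t) := by
      intro i t
      rw [hmulψ]
      have : (((2 * yL i).val : ℕ) : ZMod p) = d i := by
        rw [hval1, map_mul, hd]
        simp only
        congr 1
        · rw [map_ofNat]
        · rw [hyL]
          simp only
          rw [map_natCast]
      rw [this]
    have key_iff : ∀ t : Fin k → ZMod p,
        (∑ i, (yL i + ψ (t i)) ^ 2 = (lam : ZMod (p ^ (s + 1)))) ↔ ∑ i, d i * t i = a := by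
      intro t
      have hterm : ∀ i, (yL i + ψ (t i)) ^ 2 = yL i ^ 2 + ψ (d i * t i) := by
        intro i
        have h1 : (yL i + ψ (t i)) ^ 2 = yL i ^ 2 + (2 * yL i) * ψ (t i) + ψ (t i) * ψ (t i) := by
          ring
        rw [h1, hψsq, add_zero, hdψ]
      have hsum : (∑ i, ψ (d i * t i)) = ψ (∑ i, d i * t i) := by
        have := map_sum Ψ (fun i => d i * t i) Finset.univ
        exact this.symm
      rw [Finset.sum_congr rfl fun i _ => hterm i, Finset.sum_add_distrib, hsum]
      constructor
      · intro h
        apply hψinj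
        rw [← hAa, hA]
        exact eq_sub_of_add_eq' h
      · intro h
        rw [h, ← hAa, hA]
        ring
    obtain ⟨j, hj⟩ := y.2.2
    have hdj : d j ≠ 0 := by
      rw [hd]
      simp only
      intro h
      rcases mul_eq_zero.mp h with h2 | h0
      · exact h2ne h2
      · apply hj
        rw [pdvd_iff p s hp0 (by omega)]
        exact (ZMod.natCast_eq_zero_iff _ _).mp h0
    have hπg : ∀ (t : Fin k → ZMod p) i, π (yL i + ψ (t i)) = y.1 i := by
      intro t i
      rw [map_add, hπyL, hπψ, add_zero]
    let g : {t : Fin k → ZMod p // ∑ i, d i * t i = a} → {x // Φ x = y} :=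
      fun t => ⟨⟨fun i => yL i + ψ (t.1 i),
        ⟨(key_iff t.1).mpr t.2, ⟨j, fun h => hj (by
          rw [hdvd1, hπg t.1 j] at h
          exact h)⟩⟩⟩,
        Subtype.ext (funext fun i => hπg t.1 i)⟩
    have hginj : Function.Injective g := by
      intro t t' h
      apply Subtype.ext
      funext i
      have h1 : yL i + ψ (t.1 i) = yL i + ψ (t'.1 i) :=
        congrFun (congrArg (fun z => z.1.1) h) i
      exact hψinj (add_left_cancel h1)
    have hgsurj : Function.Surjective g := by
      rintro ⟨⟨x, hx⟩, hxy⟩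
      have hxyi : ∀ i, π (x i) = y.1 i := by
        intro i
        exact congrFun (congrArg Subtype.val hxy) i
      have hdec : ∀ i, yL i + ψ (((x i).val / p ^ s : ℕ) : ZMod p) = x i :=
        fun i => (hdecomp (x i) i (hxyi i)).symm
      refine ⟨⟨fun i => (((x i).val / p ^ s : ℕ) : ZMod p), ?_⟩, ?_⟩
      · rw [← key_iff]
        rw [Finset.sum_congr rfl fun i _ => by rw [hdec i]]
        exact hx.1
      · apply Subtype.ext
        apply Subtype.ext
        funext i
        exact hdec i
    rw [← Nat.card_congr (Equiv.ofBijective g ⟨hginj, hgsurj⟩)]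
    exact card_linear_eq p k d j hdj a
  -- assemble
  haveI : Fintype {x : Fin k → ZMod (p ^ s) //
      (∑ i, x i ^ 2 = (lam : ZMod (p ^ s))) ∧ ∃ i, ¬ (p : ZMod (p ^ s)) ∣ x i} :=
    Fintype.ofFinite _
  haveI : ∀ y, Fintype {x // Φ x = y} := fun y => Fintype.ofFinite _
  have e1 := Equiv.sigmaFiberEquiv Φ
  show Nat.card _ = p ^ (k - 1) * Nat.card _
  rw [← Nat.card_congr e1, Nat.card_eq_fintype_card, Fintype.card_sigma]
  have : ∀ y, Fintype.card {x // Φ x = y} = p ^ (k - 1) := by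
    intro y
    rw [← Nat.card_eq_fintype_card, hfib y]
  rw [Finset.sum_congr rfl fun y _ => this y, Finset.sum_const, Finset.card_univ, smul_eq_mul,
    Nat.card_eq_fintype_card, mul_comm]


/-- For an odd prime `p`, `ρ^{(1)}_{k,λ}(p^s) = p^{(s−1)(k−1)} · ρ^{(1)}_{k,λ mod p}(p)`. -/
theorem rho1_prime_pow (p : ℕ) (hp : p.Prime) (hodd : Odd p) (k : ℕ) (hk : 0 < k)
    (s : ℕ) (hs : 1 ≤ s) (lam : ℤ) (hlam0 : 0 ≤ lam) (hlam1 : lam < (p : ℤ) ^ s) :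
    rho1 k lam p s = p ^ ((s - 1) * (k - 1)) * rho1 k (lam % p) p 1 := by
  have base : rho1 k lam p 1 = rho1 k (lam % p) p 1 := by
    unfold rho1
    apply Nat.card_congr
    apply Equiv.subtypeEquivRight
    intro x
    have hd : ((p : ℕ) : ZMod (p ^ 1)) = 0 :=
      (ZMod.natCast_eq_zero_iff _ _).mpr (by rw [pow_one])
    have hcast : ((lam % (p : ℤ) : ℤ) : ZMod (p ^ 1)) = ((lam : ℤ) : ZMod (p ^ 1)) := by
      rw [Int.emod_def]
      push_cast [hd]
      ring
    rw [hcast]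
  have main : ∀ m : ℕ, rho1 k lam p (m + 1) = p ^ (m * (k - 1)) * rho1 k lam p 1 := by
    intro m
    induction m with
    | zero => simp
    | succ m ih =>
        rw [rho1_step p hp hodd k (m + 1) (by omega) lam, ih, ← mul_assoc, ← pow_add]
        congr 2
        rw [Nat.succ_mul]
        omega
  obtain ⟨m, rfl⟩ : ∃ m, s = m + 1 := ⟨s - 1, by omega⟩
  simp only [Nat.add_sub_cancel]
  rw [main m, base]
end

section
/- Let k be a positive integer, s ≥ 3 an integer, and λ an integer with 0 ≤ λ < 2^s. Then ρ^(1)_{k,λ}(2^s) = 2^{(s−3)(k−1)} · ρ^(1)_{k, λ mod 8}(8). -/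
open Function

theorem AddMonoidHom.card_preimage_of_surjective {G H : Type*} [AddGroup G] [AddGroup H]
    (f : G →+ H) (hf : Surjective f) (t : Set H) :
    Nat.card (f ⁻¹' t) = Nat.card f.ker * Nat.card t := by
  let e := QuotientAddGroup.quotientKerEquivOfSurjective f hf
  rw [show f ⁻¹' t = QuotientAddGroup.mk ⁻¹' (e ⁻¹' t) from rfl,
    Nat.card_congr (QuotientAddGroup.preimageMkEquivAddSubgroupProdSet _ _), Nat.card_prod,
    Nat.card_preimage_of_injective e.injective (by simp [e.surjective.range_eq])]

theorem ZMod.card_subtype_cast_comp {ι : Type*} [Fintype ι] {d m N : ℕ} [NeZero m] [NeZero N]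
    (hN : N = d * m) (p : (ι → ZMod m) → Prop) :
    Nat.card {y : ι → ZMod N // p fun i => (y i).cast} =
      d ^ Fintype.card ι * Nat.card {x // p x} := by
  have hdvd : m ∣ N := hN ▸ dvd_mul_left m d
  let π : (ι → ZMod N) →+ (ι → ZMod m) :=
    (ZMod.castHom hdvd (ZMod m)).toAddMonoidHom.compLeft ι
  have hπ : Surjective π := (ZMod.ringHom_surjective (ZMod.castHom hdvd (ZMod m))).comp_left
  have hker : Nat.card π.ker = d ^ Fintype.card ι := by
    have h := π.card_preimage_of_surjective hπ Set.univ
    rw [Set.preimage_univ, Nat.card_univ, Nat.card_univ, Nat.card_fun, Nat.card_fun,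
      Nat.card_zmod, Nat.card_zmod, Nat.card_eq_fintype_card,
      show N ^ Fintype.card ι = d ^ Fintype.card ι * m ^ Fintype.card ι by rw [hN, mul_pow]] at h
    exact (Nat.eq_of_mul_eq_mul_right (pow_pos (NeZero.pos m) _) h).symm
  rw [← hker]
  exact π.card_preimage_of_surjective hπ {x | p x}

namespace ZMod

theorem cast_eq_zero_iff_of_eq_two_mul {m N : ℕ} [NeZero m] (hN : N = 2 * m) (z : ZMod N) :
    (z.cast : ZMod m) = 0 ↔ z = 0 ∨ z = m := by
  subst hN
  constructor
  · intro h
    rw [cast_eq_val, natCast_eq_zero_iff] at h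
    obtain ⟨c, hc⟩ := h
    have hc2 : c < 2 := by
      have := z.val_lt
      nlinarith [NeZero.pos m]
    interval_cases c
    · exact Or.inl ((val_eq_zero z).mp hc)
    · exact Or.inr (by rw [← natCast_zmod_val z, hc, mul_one])
  · rintro (rfl | rfl)
    · exact cast_zero
    · rw [cast_natCast (dvd_mul_left m 2), natCast_self]

theorem cast_eq_cast_iff_of_eq_two_mul {m N : ℕ} [NeZero m] (hN : N = 2 * m) (a b : ZMod N) :
    (a.cast : ZMod m) = b.cast ↔ a = b ∨ a = b + m := by
  have hdvd : m ∣ N := hN ▸ dvd_mul_left m 2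
  rw [← sub_eq_zero, ← castHom_apply (h := hdvd), ← castHom_apply (h := hdvd),
    ← map_sub, castHom_apply, cast_eq_zero_iff_of_eq_two_mul hN, sub_eq_zero,
    sub_eq_iff_eq_add']

theorem two_dvd_cast_iff {m N : ℕ} [NeZero m] (hN : N = 2 * m) (hm : 2 ∣ m) (y : ZMod N) :
    (2 : ZMod m) ∣ y.cast ↔ (2 : ZMod N) ∣ y := by
  have hdvd : m ∣ N := hN ▸ dvd_mul_left m 2
  constructor
  · rintro ⟨c, hc⟩
    obtain ⟨c, rfl⟩ := ringHom_surjective (castHom hdvd (ZMod m)) c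
    obtain ⟨r, hr⟩ := hm
    have h2 : ((m : ℕ) : ZMod N) = 2 * r := by rw [hr]; push_cast; rfl
    rw [← map_ofNat (castHom hdvd (ZMod m)) 2, ← map_mul, castHom_apply,
      cast_eq_cast_iff_of_eq_two_mul hN, h2] at hc
    rcases hc with rfl | rfl
    · exact dvd_mul_right 2 c
    · rw [← mul_add]; exact dvd_mul_right 2 _
  · intro h
    simpa only [map_ofNat, castHom_apply] using map_dvd (castHom hdvd (ZMod m)) h

theorem exists_eq_two_mul_add_one {n : ℕ} [NeZero n] {u : ZMod n} (hu : ¬ 2 ∣ u) :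
    ∃ w, u = 2 * w + 1 := by
  obtain ⟨w, hw | hw⟩ := Nat.even_or_odd' u.val
  · exact absurd ⟨w, by rw [← natCast_zmod_val u, hw]; push_cast; ring⟩ hu
  · exact ⟨w, by rw [← natCast_zmod_val u, hw]; push_cast; ring⟩

theorem sq_neg_sub_two_pow {s : ℕ} (hs : 3 ≤ s) {u : ZMod (2 ^ (s + 1))} (hu : ¬ 2 ∣ u) :
    (-u - 2 ^ (s - 1)) ^ 2 = u ^ 2 + 2 ^ s := by
  obtain ⟨w, rfl⟩ := exists_eq_two_mul_add_one hu
  obtain ⟨t, rfl⟩ : ∃ t, s = t + 3 := ⟨s - 3, by omega⟩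
  have h0 : (2 : ZMod (2 ^ (t + 3 + 1))) ^ (t + 3 + 1) = 0 := by
    exact_mod_cast natCast_self (2 ^ (t + 3 + 1))
  rw [show t + 3 - 1 = t + 2 by omega]
  linear_combination (w + 2 ^ t) * h0

end ZMod

namespace Fin

variable {R : Type*} {k : ℕ} (P : R → Prop) [DecidablePred P] (f : R → R)

def updateFind (y : Fin k → R) : Fin k → R :=
  if h : ∃ i, P (y i) then update y (Fin.find _ h) (f (y (Fin.find _ h))) else y

variable {P f}

theorem exists_updateFind_eq_update (y : Fin k → R) (h : ∃ i, P (y i)) :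
    ∃ i, P (y i) ∧ updateFind P f y = update y i (f (y i)) :=
  ⟨_, Fin.find_spec h, dif_pos h⟩

theorem updateFind_involutive (hf : Involutive f) (hP : ∀ u, P (f u) ↔ P u) :
    Involutive (updateFind (k := k) P f) := by
  intro y
  by_cases h : ∃ i, P (y i)
  · have hPy : ∀ j, P (updateFind P f y j) ↔ P (y j) := by
      intro j
      rw [updateFind, dif_pos h]
      rcases eq_or_ne j (Fin.find _ h) with rfl | hj
      · rw [update_self, hP]
      · rw [update_of_ne hj]
    have h' : ∃ i, P (updateFind P f y i) := h.imp fun i hi => (hPy i).mpr hi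
    have hfind : Fin.find _ h' = Fin.find _ h := Fin.find_congr' (hPy _)
    rw [updateFind, dif_pos h', hfind, updateFind, dif_pos h, update_self, hf, update_idem,
      update_eq_self]
  · have hy : updateFind P f y = y := dif_neg h
    rw [hy, hy]

end Fin

theorem Finset.sum_comp_update {ι M R : Type*} [Fintype ι] [DecidableEq ι] [AddCommGroup M]
    (g : R → M) (y : ι → R) (i : ι) (b : R) :
    ∑ j, g (update y i b j) = ∑ j, g (y j) + (g b - g (y i)) := by
  simp_rw [apply_update (fun _ => g), Finset.sum_update_of_mem (Finset.mem_univ i),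
    Finset.sum_eq_add_sum_sdiff_singleton_of_mem (Finset.mem_univ i) (fun j => g (y j))]
  abel

theorem rho1_succ_add_two_pow {k s : ℕ} (hs : 3 ≤ s) (lam : ℤ) :
    rho1 k (lam + 2 ^ s) 2 (s + 1) = rho1 k lam 2 (s + 1) := by
  classical
  set τ := Fin.updateFind (k := k) (fun u : ZMod (2 ^ (s + 1)) => ¬ 2 ∣ u)
    (fun u => -u - 2 ^ (s - 1))
  have hpar (u : ZMod (2 ^ (s + 1))) : ¬ 2 ∣ (-u - 2 ^ (s - 1)) ↔ ¬ 2 ∣ u := by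
    have h2 : (2 : ZMod (2 ^ (s + 1))) ^ (s - 1) = 2 * 2 ^ (s - 2) := by
      rw [← pow_succ']; congr 1; omega
    rw [h2, ← neg_add', dvd_neg, dvd_add_left (dvd_mul_right _ _)]
  have hτ : Involutive τ := Fin.updateFind_involutive (fun u => by ring) hpar
  have hτ_sq (y : Fin k → ZMod (2 ^ (s + 1))) (h : ∃ i, ¬ 2 ∣ y i) :
      ∑ i, τ y i ^ 2 = ∑ i, y i ^ 2 + 2 ^ s ∧ ∃ i, ¬ 2 ∣ τ y i := by
    obtain ⟨i, hi, hτy⟩ : ∃ i, ¬ 2 ∣ y i ∧ τ y = update y i (-y i - 2 ^ (s - 1)) :=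
      Fin.exists_updateFind_eq_update (P := fun u => ¬ 2 ∣ u)
        (f := fun u => -u - 2 ^ (s - 1)) y h
    rw [hτy, Finset.sum_comp_update (· ^ 2), ZMod.sq_neg_sub_two_pow hs hi]
    exact ⟨by ring, i, by rwa [update_self, hpar]⟩
  have h2s : (2 : ZMod (2 ^ (s + 1))) ^ s + 2 ^ s = 0 := by
    rw [← two_mul, ← pow_succ']
    exact_mod_cast ZMod.natCast_self (2 ^ (s + 1))
  simp only [rho1, Nat.cast_ofNat, Int.cast_add, Int.cast_pow, Int.cast_ofNat]
  refine (Nat.card_congr (Equiv.subtypeEquiv hτ.toPerm fun y => ⟨?_, ?_⟩)).symm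
  · rintro ⟨hsum, hodd⟩
    obtain ⟨h1, h2⟩ := hτ_sq y hodd
    exact ⟨by rw [Involutive.coe_toPerm, h1, hsum], h2⟩
  · rintro ⟨hsum, hodd⟩
    rw [Involutive.coe_toPerm] at hsum hodd
    obtain ⟨h1, h2⟩ := hτ_sq (τ y) hodd
    rw [hτ y] at h1 h2
    exact ⟨by rw [h1, hsum, add_assoc, h2s, add_zero], h2⟩

theorem rho1_succ_add_rho1_succ {k s : ℕ} (hs : 1 ≤ s) (lam : ℤ) :
    rho1 k lam 2 (s + 1) + rho1 k (lam + 2 ^ s) 2 (s + 1) = 2 ^ k * rho1 k lam 2 s := by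
  classical
  have hN : 2 ^ (s + 1) = 2 * 2 ^ s := pow_succ' 2 s
  have hdvd : 2 ^ s ∣ 2 ^ (s + 1) := pow_dvd_pow 2 s.le_succ
  have hlift (y : Fin k → ZMod (2 ^ (s + 1))) :
      (∑ i, (y i).cast ^ 2 = (lam : ZMod (2 ^ s)) ∧ ∃ i, ¬ 2 ∣ ((y i).cast : ZMod (2 ^ s))) ↔
        (∑ i, y i ^ 2 = lam ∧ ∃ i, ¬ 2 ∣ y i) ∨
          (∑ i, y i ^ 2 = lam + 2 ^ s ∧ ∃ i, ¬ 2 ∣ y i) := by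
    rw [← map_intCast (ZMod.castHom hdvd (ZMod (2 ^ s))) lam]
    simp_rw [← ZMod.castHom_apply (h := hdvd), ← map_pow, ← map_sum, ZMod.castHom_apply,
      ZMod.cast_eq_cast_iff_of_eq_two_mul hN, ZMod.two_dvd_cast_iff hN (dvd_pow_self 2 (by omega)),
      or_and_right]
    push_cast
    rfl
  have hdisj : Disjoint
      (fun y : Fin k → ZMod (2 ^ (s + 1)) => ∑ i, y i ^ 2 = lam ∧ ∃ i, ¬ 2 ∣ y i)
      (fun y => ∑ i, y i ^ 2 = lam + 2 ^ s ∧ ∃ i, ¬ 2 ∣ y i) := by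
    refine disjoint_iff_inf_le.mpr fun y hy => ?_
    obtain ⟨⟨h1, -⟩, ⟨h2, -⟩⟩ := hy
    rw [h1, left_eq_add] at h2
    have hne : ((2 ^ s : ℕ) : ZMod (2 ^ (s + 1))) ≠ 0 := by
      rw [Ne, ZMod.natCast_eq_zero_iff, Nat.pow_dvd_pow_iff_le_right (by norm_num)]
      omega
    exact hne (by exact_mod_cast h2)
  simp only [rho1, Nat.cast_ofNat, Int.cast_add, Int.cast_pow, Int.cast_ofNat]
  rw [← Nat.card_sum, ← Nat.card_congr (subtypeOrEquiv _ _ hdisj),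
    ← Nat.card_congr (Equiv.subtypeEquivRight hlift), ZMod.card_subtype_cast_comp hN
      (fun x => ∑ i, x i ^ 2 = (lam : ZMod (2 ^ s)) ∧ ∃ i, ¬ 2 ∣ x i), Fintype.card_fin]

theorem rho1_two_pow_succ {k s : ℕ} (hk : 0 < k) (hs : 3 ≤ s) (lam : ℤ) :
    rho1 k lam 2 (s + 1) = 2 ^ (k - 1) * rho1 k lam 2 s := by
  have h := rho1_succ_add_rho1_succ (k := k) (by omega : 1 ≤ s) lam
  obtain ⟨j, rfl⟩ : ∃ j, k = j + 1 := ⟨k - 1, by omega⟩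
  rw [rho1_succ_add_two_pow hs, ← two_mul, pow_succ', mul_assoc] at h
  simpa using Nat.eq_of_mul_eq_mul_left two_pos h

theorem rho1_two_pow_eq_mul_rho1_eight {k s : ℕ} (hk : 0 < k) (hs : 3 ≤ s) (lam : ℤ) :
    rho1 k lam 2 s = 2 ^ ((s - 3) * (k - 1)) * rho1 k lam 2 3 := by
  induction s, hs using Nat.le_induction with
  | base => simp
  | succ s hs ih =>
    rw [rho1_two_pow_succ hk hs, ih, ← mul_assoc, ← pow_add, Nat.sub_add_comm hs, add_one_mul,
      add_comm]

theorem rho1_emod_pow (k : ℕ) (lam : ℤ) (p s : ℕ) :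
    rho1 k (lam % (p ^ s : ℕ)) p s = rho1 k lam p s := by
  simp only [rho1, ZMod.intCast_mod]

theorem rho1_two_pow_general (k : ℕ) (hk : 0 < k) (s : ℕ) (hs : 3 ≤ s)
    (lam : ℤ) :
    rho1 k lam 2 s = 2 ^ ((s - 3) * (k - 1)) * rho1 k (lam % 8) 2 3 := by
  rw [rho1_two_pow_eq_mul_rho1_eight hk hs, show (8 : ℤ) = (2 ^ 3 : ℕ) by norm_num,
    rho1_emod_pow]

/-- `ρ^{(1)}_{k,λ}(2^s) = 2^{(s−3)(k−1)} · ρ^{(1)}_{k,λ mod 8}(8)` for `s ≥ 3`. -/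
theorem rho1_two_pow (k : ℕ) (hk : 0 < k) (s : ℕ) (hs : 3 ≤ s)
    (lam : ℤ) (hlam0 : 0 ≤ lam) (hlam1 : lam < 2 ^ s) :
    rho1 k lam 2 s = 2 ^ ((s - 3) * (k - 1)) * rho1 k (lam % 8) 2 3 :=
  rho1_two_pow_general k hk s hs lam
end

section
/- Let p be a prime, k a positive integer, s ≥ 1 an integer, and λ an integer with 0 ≤ λ < p^s. Then ρ^(2)_{k,λ}(p^s) = 1 if s = 1 and λ = 0; ρ^(2)_{k,λ}(p^s) = p^k if s = 2 and λ = 0; ρ^(2)_{k,λ}(p^s) = p^k · ρ_{k, λ/p²}(p^{s−2}) if s ≥ 3 and p² ∣ λ; and ρ^(2)_{k,λ}(p^s) = 0 in all other cases. -/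
/-- `rho2 k lam p s` is the number of `k`-tuples `(x₁,…,x_k) ∈ (ℤ/p^sℤ)^k` with
`x₁² + ⋯ + x_k² ≡ lam (mod p^s)` such that `p ∣ xᵢ` for every index `i`. -/
noncomputable def rho2 (k : ℕ) (lam : ℤ) (p s : ℕ) : ℕ :=
  Nat.card {x : Fin k → ZMod (p ^ s) //
    (∑ i, x i ^ 2 = (lam : ZMod (p ^ s))) ∧ ∀ i, (p : ZMod (p ^ s)) ∣ x i}

lemma auxP (p t : ℕ) : ((p : ZMod (p^(t+2))))^(t+2) = 0 := by
  have h := ZMod.natCast_self (p^(t+2))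
  push_cast at h
  exact h

lemma sq_formula (p t : ℕ) (a b : ZMod (p^(t+2))) :
    ((p : ZMod (p^(t+2))) * a + (p : ZMod (p^(t+2)))^(t+1) * b)^2
      = (p : ZMod (p^(t+2)))^2 * a^2 := by
  have h0 := auxP p t
  have h : ((p : ZMod (p^(t+2))) * a + (p : ZMod (p^(t+2)))^(t+1) * b)^2
      = (p : ZMod (p^(t+2)))^2 * a^2
        + (p : ZMod (p^(t+2)))^(t+2) * (2*(a*b) + (p : ZMod (p^(t+2)))^t * b^2) := by
    ring
  rw [h, h0, zero_mul, add_zero]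

lemma dvd_val (p t : ℕ) (x : ZMod (p^(t+2))) (h : (p : ZMod (p^(t+2))) ∣ x) :
    p ∣ x.val := by
  obtain ⟨z, hz⟩ := h
  subst hz
  rw [ZMod.val_mul]
  have hd : p ∣ p^(t+2) := dvd_pow_self p (by omega)
  rw [Nat.dvd_mod_iff hd]
  exact Dvd.dvd.mul_right (by rw [ZMod.val_natCast, Nat.dvd_mod_iff hd]) _

lemma cong_iff (p t : ℕ) (hp : p.Prime) (μ : ℤ) (N : ℕ) :
    (((p^2 * N : ℕ) : ZMod (p^(t+2))) = (((p:ℤ)^2 * μ : ℤ) : ZMod (p^(t+2))))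
      ↔ ((N : ZMod (p^t)) = (μ : ZMod (p^t))) := by
  have h1 : (((p^2 * N : ℕ) : ℤ) : ZMod (p^(t+2))) = (((p:ℤ)^2 * μ : ℤ) : ZMod (p^(t+2)))
      ↔ ((N : ZMod (p^t)) = (μ : ZMod (p^t))) := by
    rw [ZMod.intCast_eq_intCast_iff, show ((N : ℕ) : ZMod (p^t)) = (((N:ℕ):ℤ) : ZMod (p^t)) by push_cast; rfl,
      ZMod.intCast_eq_intCast_iff, Int.modEq_iff_dvd, Int.modEq_iff_dvd]
    push_cast
    rw [show ((p:ℤ)^(t+2)) = (p:ℤ)^2 * (p:ℤ)^t by ring,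
      show ((p:ℤ)^2 * μ - (p:ℤ)^2 * (N:ℤ)) = (p:ℤ)^2 * (μ - N) by ring]
    exact mul_dvd_mul_iff_left (pow_ne_zero 2 (by exact_mod_cast hp.pos.ne' : (p:ℤ) ≠ 0))
  rw [← h1]
  push_cast
  rfl

lemma sum_sq (p t k : ℕ) (a b : Fin k → ℕ) (x : Fin k → ZMod (p^(t+2)))
    (hx : ∀ i, x i = ((p * a i + p^(t+1) * b i : ℕ) : ZMod (p^(t+2)))) :
    ∑ i, x i ^ 2 = ((p^2 * ∑ i, (a i)^2 : ℕ) : ZMod (p^(t+2))) := by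
  push_cast
  rw [Finset.mul_sum]
  refine Finset.sum_congr rfl fun i _ => ?_
  rw [hx i]
  push_cast
  exact sq_formula p t _ _

lemma rho_one (k : ℕ) (μ : ℤ) : rho k μ 1 = 1 := by
  rw [rho]
  have : Unique {x : Fin k → ZMod 1 // ∑ i, x i ^ 2 = (μ : ZMod 1)} :=
    ⟨⟨⟨0, Subsingleton.elim _ _⟩⟩, fun a => Subtype.ext (Subsingleton.elim _ _)⟩
  exact Nat.card_unique

lemma rho2_main (p : ℕ) (hp : p.Prime) (k t : ℕ) (μ : ℤ) :
    rho2 k ((p:ℤ)^2 * μ) p (t+2) = p^k * rho k μ (p^t) := by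
  have hp1 : 1 < p := hp.one_lt
  haveI : NeZero (p^(t+2)) := ⟨pow_ne_zero _ hp.pos.ne'⟩
  haveI : NeZero (p^t) := ⟨pow_ne_zero _ hp.pos.ne'⟩
  haveI : NeZero p := ⟨hp.pos.ne'⟩
  have key : ∀ (x : Fin k → ZMod (p^(t+2))) (a b : Fin k → ℕ),
      (∀ i, x i = ((p * a i + p^(t+1) * b i : ℕ) : ZMod (p^(t+2)))) →
      ((∑ i, x i ^ 2 = (((p:ℤ)^2 * μ : ℤ) : ZMod (p^(t+2)))) ↔
        ((∑ i, (a i)^2 : ℕ) : ZMod (p^t)) = (μ : ZMod (p^t))) := by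
    intro x a b hx
    rw [sum_sq p t k a b x hx]
    exact cong_iff p t hp μ _
  let e : {x : Fin k → ZMod (p^(t+2)) //
      (∑ i, x i ^ 2 = (((p:ℤ)^2 * μ : ℤ) : ZMod (p^(t+2)))) ∧
        ∀ i, (p : ZMod (p^(t+2))) ∣ x i} ≃
      (Fin k → ZMod p) × {y : Fin k → ZMod (p^t) // ∑ i, y i ^ 2 = (μ : ZMod (p^t))} :=
  { toFun := fun x =>
      ⟨fun i => (((x.1 i).val / p^(t+1) : ℕ) : ZMod p),
       ⟨fun i => (((x.1 i).val / p : ℕ) : ZMod (p^t)), by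
        have hx : ∀ i, x.1 i = ((p * ((x.1 i).val / p) + p^(t+1) * 0 : ℕ) : ZMod (p^(t+2))) := by
          intro i
          rw [mul_zero, add_zero, Nat.mul_div_cancel' (dvd_val p t _ (x.2.2 i))]
          exact (ZMod.natCast_rightInverse _).symm
        have h := (key x.1 _ _ hx).mp x.2.1
        rw [← h]
        push_cast
        rfl⟩⟩,
    invFun := fun cy =>
      ⟨fun i => ((p * (cy.2.1 i).val + p^(t+1) * (cy.1 i).val : ℕ) : ZMod (p^(t+2))), by
        constructor
        · exact (key _ (fun i => (cy.2.1 i).val) (fun i => (cy.1 i).val) (fun i => rfl)).mpr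
            (by
              have : ((∑ i, ((cy.2.1 i).val)^2 : ℕ) : ZMod (p^t))
                  = ∑ i, (cy.2.1 i)^2 := by
                push_cast
                refine Finset.sum_congr rfl fun i _ => ?_
                rw [ZMod.natCast_rightInverse (cy.2.1 i)]
              rw [this, cy.2.2])
        · intro i
          refine ⟨(((cy.2.1 i).val + p^t * (cy.1 i).val : ℕ) : ZMod (p^(t+2))), ?_⟩
          push_cast
          ring⟩,
    left_inv := by
      rintro ⟨x, hx⟩
      refine Subtype.ext (funext fun i => ?_)
      have hd : p ∣ (x i).val := dvd_val p t _ (hx.2 i)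
      have hvlt : (x i).val < p^(t+2) := ZMod.val_lt _
      set v := (x i).val with hv
      have hq : v / p^(t+1) = (v / p) / p^t := by
        rw [Nat.div_div_eq_div_mul, ← pow_succ']
      have hqlt : v / p^(t+1) < p := by
        rw [Nat.div_lt_iff_lt_mul (by positivity)]
        calc v < p^(t+2) := hvlt
        _ = p * p^(t+1) := by ring
      simp only
      rw [ZMod.val_natCast, ZMod.val_natCast, Nat.mod_eq_of_lt hqlt, hq]
      have harith : p * (v / p % p^t) + p^(t+1) * (v / p / p^t) = v := by
        have h1 : v / p % p^t + p^t * (v / p / p^t) = v / p := Nat.mod_add_div _ _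
        have h2 : p * (v / p) = v := Nat.mul_div_cancel' hd
        calc p * (v / p % p^t) + p^(t+1) * (v / p / p^t)
            = p * (v / p % p^t + p^t * (v / p / p^t)) := by ring
          _ = p * (v / p) := by rw [h1]
          _ = v := h2
      rw [harith]
      exact ZMod.natCast_rightInverse (x i)
    right_inv := by
      rintro ⟨c, y, hy⟩
      have hyv : ∀ i, (y i).val < p^t := fun i => ZMod.val_lt _
      have hcv : ∀ i, (c i).val < p := fun i => ZMod.val_lt _
      have hlt : ∀ i, p * (y i).val + p^(t+1) * (c i).val < p^(t+2) := by
        intro i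
        have h1 : p * (y i).val < p * p^t := by
          exact mul_lt_mul_of_pos_left (hyv i) hp.pos
        have h2 : p^(t+1) * ((c i).val + 1) ≤ p^(t+1) * p :=
          Nat.mul_le_mul le_rfl (hcv i)
        have e1 : p * p^t = p^(t+1) := by ring
        have e2 : p^(t+1) * p = p^(t+2) := by ring
        have e3 : p^(t+1) * ((c i).val + 1) = p^(t+1) * (c i).val + p^(t+1) := by ring
        omega
      have hval : ∀ i, (((p * (y i).val + p^(t+1) * (c i).val : ℕ) :
          ZMod (p^(t+2)))).val = p * (y i).val + p^(t+1) * (c i).val := by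
        intro i
        rw [ZMod.val_natCast, Nat.mod_eq_of_lt (hlt i)]
      refine Prod.ext (funext fun i => ?_) (Subtype.ext (funext fun i => ?_))
      · simp only [hval i]
        have hdv : (p * (y i).val + p^(t+1) * (c i).val) / p^(t+1) = (c i).val := by
          rw [Nat.add_mul_div_left _ _ (by positivity : (0:ℕ) < p^(t+1)),
            Nat.div_eq_of_lt (by
              calc p * (y i).val < p * p^t := mul_lt_mul_of_pos_left (hyv i) hp.pos
              _ = p^(t+1) := by ring), zero_add]
        rw [hdv]
        exact ZMod.natCast_rightInverse (c i)
      · simp only [hval i]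
        have hdv : (p * (y i).val + p^(t+1) * (c i).val) / p = (y i).val + p^t * (c i).val := by
          rw [show p * (y i).val + p^(t+1) * (c i).val = p * ((y i).val + p^t * (c i).val) by ring,
            Nat.mul_div_cancel_left _ hp.pos]
        rw [hdv]
        have hz : ((p^t : ℕ) : ZMod (p^t)) = 0 := ZMod.natCast_self _
        push_cast [hz]
        rw [zero_mul, add_zero]
        push_cast
        exact ZMod.natCast_rightInverse (y i) }
  rw [rho2, Nat.card_congr e, Nat.card_prod, rho]
  congr 1
  simp [Nat.card_pi]

lemma rho2_not_dvd (p : ℕ) (hp : p.Prime) (k t : ℕ) (lam : ℤ)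
    (h : ¬ (p:ℤ)^2 ∣ lam) : rho2 k lam p (t+2) = 0 := by
  haveI : NeZero (p^(t+2)) := ⟨pow_ne_zero _ hp.pos.ne'⟩
  rw [rho2, Nat.card_eq_zero]
  left
  refine ⟨fun x => h ?_⟩
  obtain ⟨x, hsum, hdvd⟩ := x
  have hx : ∀ i, x i = ((p * ((x i).val / p) + p^(t+1) * 0 : ℕ) : ZMod (p^(t+2))) := by
    intro i
    rw [mul_zero, add_zero, Nat.mul_div_cancel' (dvd_val p t _ (hdvd i))]
    exact (ZMod.natCast_rightInverse _).symm
  have hs := sum_sq p t k _ _ x hx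
  rw [hsum] at hs
  set N : ℕ := ∑ i, ((x i).val / p)^2 with hN
  have h0 : ((lam - (p:ℤ)^2 * N : ℤ) : ZMod (p^(t+2))) = 0 := by
    push_cast at hs ⊢
    rw [hs]
    ring
  have hd : ((p^(t+2) : ℕ) : ℤ) ∣ lam - (p:ℤ)^2 * N :=
    (ZMod.intCast_zmod_eq_zero_iff_dvd _ _).mp h0
  have hd2 : (p:ℤ)^2 ∣ lam - (p:ℤ)^2 * N := by
    refine dvd_trans ?_ hd
    push_cast
    exact ⟨(p:ℤ)^t, by ring⟩
  have := dvd_add hd2 (Dvd.intro N rfl)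
  simpa using this

lemma zmod_pow_cast_zero (p t : ℕ) (hp : p.Prime) (lam : ℤ) (h0 : 0 ≤ lam)
    (h1 : lam < (p:ℤ)^t) (hz : (lam : ZMod (p^t)) = 0) : lam = 0 := by
  have := (ZMod.intCast_zmod_eq_zero_iff_dvd _ _).mp hz
  push_cast at this
  rcases eq_or_lt_of_le h0 with h | h
  · omega
  · exact absurd (Int.le_of_dvd h this) (by omega)

lemma rho2_one_zero (p : ℕ) (hp : p.Prime) (k : ℕ) : rho2 k 0 p 1 = 1 := by
  haveI : NeZero (p^1) := ⟨pow_ne_zero _ hp.pos.ne'⟩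
  have hp0 : (p : ZMod (p^1)) = 0 := by
    have h := ZMod.natCast_self (p^1)
    push_cast at h
    simpa using h
  rw [rho2]
  have : Unique {x : Fin k → ZMod (p^1) //
      (∑ i, x i ^ 2 = ((0:ℤ) : ZMod (p^1))) ∧ ∀ i, (p : ZMod (p^1)) ∣ x i} := by
    refine ⟨⟨⟨0, by simp⟩⟩, ?_⟩
    rintro ⟨x, hx1, hx2⟩
    refine Subtype.ext (funext fun i => ?_)
    have := hx2 i
    rw [hp0, zero_dvd_iff] at this
    simpa using this
  exact Nat.card_unique

lemma rho2_one_ne (p : ℕ) (hp : p.Prime) (k : ℕ) (lam : ℤ) (h0 : 0 ≤ lam)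
    (h1 : lam < (p:ℤ)^1) (hne : lam ≠ 0) : rho2 k lam p 1 = 0 := by
  haveI : NeZero (p^1) := ⟨pow_ne_zero _ hp.pos.ne'⟩
  have hp0 : (p : ZMod (p^1)) = 0 := by
    have h := ZMod.natCast_self (p^1)
    push_cast at h
    simpa using h
  rw [rho2, Nat.card_eq_zero]
  left
  refine ⟨fun x => hne ?_⟩
  obtain ⟨x, hsum, hdvd⟩ := x
  have hx0 : ∀ i, x i = 0 := by
    intro i
    have := hdvd i
    rwa [hp0, zero_dvd_iff] at this
  apply zmod_pow_cast_zero p 1 hp lam h0 h1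
  rw [← hsum]
  simp [hx0]

/-- The recursive description of `ρ^{(2)}_{k,λ}(p^s)`. -/
theorem rho2_eq (p : ℕ) (hp : p.Prime) (k : ℕ) (hk : 0 < k) (s : ℕ) (hs : 1 ≤ s)
    (lam : ℤ) (hlam0 : 0 ≤ lam) (hlam1 : lam < (p : ℤ) ^ s) :
    rho2 k lam p s =
      if s = 1 ∧ lam = 0 then 1
      else if s = 2 ∧ lam = 0 then p ^ k
      else if 3 ≤ s ∧ (p : ℤ) ^ 2 ∣ lam then p ^ k * rho k (lam / (p : ℤ) ^ 2) (p ^ (s - 2))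
      else 0 := by
  rcases Nat.lt_or_ge s 2 with hs2 | hs2
  · -- s = 1
    have hs1 : s = 1 := by omega
    subst hs1
    by_cases hl : lam = 0
    · subst hl
      rw [if_pos (show 1 = 1 ∧ (0:ℤ) = 0 from ⟨rfl, rfl⟩)]
      exact rho2_one_zero p hp k
    · rw [if_neg (by tauto), if_neg (by rintro ⟨h, _⟩; omega), if_neg (by rintro ⟨h, _⟩; omega)]
      exact rho2_one_ne p hp k lam hlam0 hlam1 hl
  · obtain ⟨t, rfl⟩ := (show ∃ t, s = t + 2 from ⟨s - 2, by omega⟩)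
    by_cases hdvd : (p:ℤ)^2 ∣ lam
    · have hμ : lam = (p:ℤ)^2 * (lam / (p:ℤ)^2) := (Int.mul_ediv_cancel' hdvd).symm
      rcases Nat.eq_zero_or_pos t with ht | ht
      · -- s = 2
        subst ht
        have hl0 : lam = 0 := by
          rcases eq_or_lt_of_le hlam0 with h | h
          · omega
          · exact absurd (Int.le_of_dvd h hdvd) (by norm_num at hlam1 ⊢; omega)
        subst hl0
        rw [if_neg (by rintro ⟨h, _⟩; omega), if_pos (show 2 = 2 ∧ (0:ℤ) = 0 from ⟨rfl, rfl⟩)]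
        have := rho2_main p hp k 0 0
        rw [mul_zero] at this
        rw [this, pow_zero, rho_one, mul_one]
      · -- s ≥ 3
        rw [if_neg (by rintro ⟨h, _⟩; omega), if_neg (by rintro ⟨h, _⟩; omega),
          if_pos ⟨by omega, hdvd⟩]
        have := rho2_main p hp k t (lam / (p:ℤ)^2)
        rw [← hμ] at this
        simpa using this
    · have hlne : lam ≠ 0 := by rintro rfl; exact hdvd (dvd_zero _)
      rw [if_neg (by rintro ⟨h, _⟩; omega), if_neg (by tauto), if_neg (by tauto)]
      exact rho2_not_dvd p hp k t lam hdvd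
end

section
/- Let p be an odd prime, k a positive integer, s ≥ 1 an integer, and λ an integer with 0 < λ < p^s. Write λ = p^r·λ' with 0 ≤ r < s and p ∤ λ'. Then ρ_{k,λ}(p^s) = Σ_{i=0}^{⌊r/2⌋} p^{ki + (s−2i−1)(k−1)} · ρ^(1)_{k, (λ/p^{2i}) mod p}(p). -/
/-!
Split the solutions modulo `p ^ s` into the primitive ones (some `xᵢ` prime to `p`), counted by
`rho1`, and the imprimitive ones, counted by `rho0`. Substituting `xᵢ = p yᵢ` shows that
imprimitive solutions force `p ^ min s 2 ∣ λ`, and that for `λ = p ^ 2 μ` there are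
`p ^ k * rho k μ (p ^ (s - 2))` of them; peeling off `p ^ 2` in this way `⌊r/2⌋` times leaves a sum
of primitive counts. For odd `p` every primitive solution modulo `p ^ s` lifts to exactly
`p ^ (k - 1)` solutions modulo `p ^ (s + 1)`: writing a lift as `x₀ + p ^ s t`, the condition on
`t` is a linear equation `2 x₀ ⬝ t = c` modulo `p`, whose coefficient vector is nonzero by
primitivity. Hence `rho1 k λ p s = p ^ ((s - 1) * (k - 1)) * rho1 k λ p 1`.
-/

open Function

theorem Nat.card_eq_card_mul_of_forall_card_fiber {α β : Type*} [Finite α] [Finite β]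
    (f : α → β) {m : ℕ} (h : ∀ b, Nat.card {a // f a = b} = m) :
    Nat.card α = Nat.card β * m := by
  have := Fintype.ofFinite β
  rw [← Nat.card_congr (Equiv.sigmaFiberEquiv f), Nat.card_sigma]
  simp [h, Nat.card_eq_fintype_card]

theorem Nat.card_subtype_eq_mul_of_card_fiber {α β : Type*} [Finite α] [Finite β] (f : α → β)
    {P : α → Prop} {Q : β → Prop} (hf : ∀ a, P a → Q (f a)) {m : ℕ}
    (h : ∀ b, Q b → Nat.card {a // P a ∧ f a = b} = m) :
    Nat.card {a // P a} = Nat.card {b // Q b} * m := by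
  refine Nat.card_eq_card_mul_of_forall_card_fiber (fun a : {a // P a} => ⟨f a, hf a a.2⟩)
    fun b => ?_
  rw [← h b b.2]
  exact Nat.card_congr
    { toFun a := ⟨a.1.1, a.1.2, congrArg Subtype.val a.2⟩
      invFun a := ⟨⟨a.1, a.2.1⟩, Subtype.ext a.2.2⟩
      left_inv _ := rfl
      right_inv _ := rfl }

theorem Nat.card_subtype_and_eq_of_injective {α β : Type*} {F : β → α} (hF : Injective F)
    {P R : α → Prop} (hR : ∀ a, R a ↔ ∃ b, F b = a) :
    Nat.card {a // P a ∧ R a} = Nat.card {b // P (F b)} := by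
  refine (Nat.card_eq_of_bijective
    (fun b : {b // P (F b)} => (⟨F b, b.2, (hR _).2 ⟨b, rfl⟩⟩ : {a // P a ∧ R a}))
    ⟨fun b c h => Subtype.ext (hF (congrArg Subtype.val h)), fun ⟨a, hPa, hRa⟩ => ?_⟩).symm
  obtain ⟨b, rfl⟩ := (hR a).1 hRa
  exact ⟨⟨b, hPa⟩, rfl⟩

theorem Nat.card_subtype_eq_card_and_add_card_and_not {α : Type*} [Finite α] (P E : α → Prop) :
    Nat.card {a // P a} = Nat.card {a // P a ∧ E a} + Nat.card {a // P a ∧ ¬ E a} := by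
  classical
  rw [← Nat.card_sum]
  exact Nat.card_congr ((Equiv.sumCompl fun a : {a // P a} => E a).symm.trans
    (Equiv.sumCongr (Equiv.subtypeSubtypeEquivSubtypeInter P E)
      (Equiv.subtypeSubtypeEquivSubtypeInter P (¬ E ·))))

theorem AddMonoidHom.card_fiber_mul_card {G H : Type*} [AddGroup G] [AddGroup H] [Finite G]
    [Finite H] {f : G →+ H} (hf : Surjective f) (h : H) :
    Nat.card {g // f g = h} * Nat.card H = Nat.card G := by
  have e : {g // f g = h} ≃ f.ker := f.fiberEquivKerOfSurjective hf h
  rw [Nat.card_congr e, mul_comm]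
  exact (Nat.card_eq_card_mul_of_forall_card_fiber f fun h =>
    Nat.card_congr (f.fiberEquivKerOfSurjective hf h)).symm

theorem card_dotProduct_eq_mul_card_eq_pow {F ι : Type*} [Field F] [Fintype F] [Fintype ι]
    {a : ι → F} (ha : a ≠ 0) (c : F) :
    Nat.card {t : ι → F // a ⬝ᵥ t = c} * Fintype.card F = Fintype.card F ^ Fintype.card ι := by
  classical
  let L : (ι → F) →+ F := AddMonoidHom.mk' (a ⬝ᵥ ·) (dotProduct_add a)
  have hL : Surjective L := by
    obtain ⟨j, hj⟩ := Function.ne_iff.1 ha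
    intro c
    exact ⟨Pi.single j (c / a j), by simp [L, dotProduct_single, mul_div_cancel₀ _ hj]⟩
  have hcard := L.card_fiber_mul_card hL c
  rwa [Nat.card_fun, Nat.card_eq_fintype_card (α := F), Nat.card_eq_fintype_card (α := ι)]
    at hcard

namespace ZMod

theorem intCast_mul_eq_intCast_mul_iff {a b N : ℕ} (hN : N = a * b) (ha : a ≠ 0) (m n : ℤ) :
    ((a * m : ℤ) : ZMod N) = ((a * n : ℤ) : ZMod N) ↔ (m : ZMod b) = n := by
  rw [intCast_eq_intCast_iff_dvd_sub, intCast_eq_intCast_iff_dvd_sub, hN, Nat.cast_mul, ← mul_sub]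
  exact mul_dvd_mul_iff_left (by exact_mod_cast ha)

theorem natCast_mul_eq_zero_iff {a b : ℕ} [NeZero a] (u : ZMod (a * b)) :
    (a : ZMod (a * b)) * u = 0 ↔ castHom (dvd_mul_left b a) (ZMod b) u = 0 := by
  obtain ⟨m, rfl⟩ := intCast_surjective u
  have := intCast_mul_eq_intCast_mul_iff (b := b) rfl (NeZero.ne a) m 0
  rwa [mul_zero, Int.cast_mul, Int.cast_natCast, Int.cast_zero, ← map_intCast
    (castHom (dvd_mul_left b a) (ZMod b)), Int.cast_zero] at this

theorem castHom_eq_zero_iff_natCast_dvd {d n : ℕ} (h : d ∣ n) (z : ZMod n) :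
    castHom h (ZMod d) z = 0 ↔ (d : ZMod n) ∣ z := by
  obtain ⟨m, rfl⟩ := intCast_surjective z
  rw [map_intCast, intCast_zmod_eq_zero_iff_dvd]
  constructor
  · rintro ⟨w, rfl⟩
    exact ⟨w, by push_cast; rfl⟩
  · rintro ⟨w, hw⟩
    obtain ⟨v, rfl⟩ := intCast_surjective w
    rw [← Int.cast_natCast, ← Int.cast_mul, intCast_eq_intCast_iff_dvd_sub] at hw
    exact (dvd_sub_right (dvd_mul_right _ _)).1 ((Int.natCast_dvd_natCast.2 h).trans hw)

theorem natCast_dvd_castHom_iff {p n N : ℕ} (hn : n ∣ N) (hp : p ∣ n) (x : ZMod N) :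
    (p : ZMod n) ∣ castHom hn (ZMod n) x ↔ (p : ZMod N) ∣ x := by
  rw [← castHom_eq_zero_iff_natCast_dvd hp, ← castHom_eq_zero_iff_natCast_dvd (hp.trans hn),
    ← RingHom.comp_apply, castHom_comp]

variable {a b : ℕ} [NeZero a] [NeZero b]

theorem natCast_mul_val_injective :
    Injective fun t : ZMod b => (a : ZMod (a * b)) * t.val := by
  intro t u h
  have := (natCast_mul_eq_zero_iff (a := a) ((t.val : ZMod (a * b)) - (u.val : ZMod (a * b)))).1
    (by rw [mul_sub]; exact sub_eq_zero.2 h)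
  rwa [map_sub, map_natCast, map_natCast, natCast_zmod_val, natCast_zmod_val, sub_eq_zero] at this

theorem natCast_dvd_iff_exists_val (z : ZMod (a * b)) :
    (a : ZMod (a * b)) ∣ z ↔ ∃ t : ZMod b, (a : ZMod (a * b)) * t.val = z := by
  refine ⟨fun ⟨w, hw⟩ => ⟨castHom (dvd_mul_left b a) (ZMod b) w, ?_⟩, fun ⟨t, ht⟩ => ⟨_, ht.symm⟩⟩
  rw [hw, ← sub_eq_zero, ← mul_sub, natCast_mul_eq_zero_iff, map_sub, map_natCast,
    natCast_zmod_val, sub_self]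

variable {ι : Type*}

theorem card_fiber_castHom_comp [Fintype ι] (y : ι → ZMod a) :
    Nat.card {x : ι → ZMod (a * b) // castHom (dvd_mul_right a b) (ZMod a) ∘ x = y} =
      b ^ Fintype.card ι := by
  have hcard := AddMonoidHom.card_fiber_mul_card
    (f := ((castHom (dvd_mul_right a b) (ZMod a)).compLeft ι).toAddMonoidHom)
    (castHom_surjective (dvd_mul_right a b)).comp_left y
  simp only [Nat.card_fun, Nat.card_zmod, Nat.card_eq_fintype_card (α := ι), mul_pow] at hcard
  exact Nat.eq_of_mul_eq_mul_right (pow_pos (NeZero.pos a) _) (hcard.trans (mul_comm _ _))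

theorem castHom_comp_eq_iff_exists_add (x₀ x : ι → ZMod (a * b)) :
    castHom (dvd_mul_right a b) (ZMod a) ∘ x = castHom (dvd_mul_right a b) (ZMod a) ∘ x₀ ↔
      ∃ t : ι → ZMod b, (fun i => x₀ i + a * (t i).val) = x := by
  simp only [funext_iff, Function.comp_apply, ← sub_eq_zero (a := castHom _ _ (x _)), ← map_sub,
    castHom_eq_zero_iff_natCast_dvd, natCast_dvd_iff_exists_val, ← eq_sub_iff_add_eq']
  exact Classical.skolem

theorem add_natCast_mul_val_injective (x₀ : ι → ZMod (a * b)) :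
    Injective fun (t : ι → ZMod b) i => x₀ i + a * (t i).val :=
  fun _ _ h => funext fun i => natCast_mul_val_injective (add_left_cancel (congrFun h i))

end ZMod

section

open ZMod

noncomputable def rho0 (k : ℕ) (lam : ℤ) (p s : ℕ) : ℕ :=
  Nat.card {x : Fin k → ZMod (p ^ s) //
    (∑ i, x i ^ 2 = (lam : ZMod (p ^ s))) ∧ ∀ i, (p : ZMod (p ^ s)) ∣ x i}

variable {p : ℕ}

theorem rho_pow_eq_rho1_add_rho0 [NeZero p] (k : ℕ) (lam : ℤ) (s : ℕ) :
    rho k lam (p ^ s) = rho1 k lam p s + rho0 k lam p s := by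
  rw [rho, rho1, rho0,
    Nat.card_subtype_eq_card_and_add_card_and_not _ fun x => ∃ i, ¬ (p : ZMod (p ^ s)) ∣ x i]
  simp only [not_exists_not]

theorem rho0_eq_zero {k s m : ℕ} {lam : ℤ} (hm2 : m ≤ 2) (hms : m ≤ s)
    (hlam : ¬ (p : ℤ) ^ m ∣ lam) : rho0 k lam p s = 0 := by
  refine Nat.card_eq_zero.2 (.inl ⟨fun ⟨x, hx, hdvd⟩ => hlam ?_⟩)
  let π := castHom (pow_dvd_pow p hms) (ZMod (p ^ m))
  have hp2 : (p : ZMod (p ^ m)) ^ 2 = 0 := by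
    exact_mod_cast (natCast_eq_zero_iff _ _).2 (pow_dvd_pow p hm2)
  have : (lam : ZMod (p ^ m)) = 0 := by
    rw [← map_intCast π, ← hx, map_sum]
    refine Finset.sum_eq_zero fun i _ => ?_
    obtain ⟨w, hw⟩ := hdvd i
    rw [hw, map_pow, map_mul, map_natCast, mul_pow, hp2, zero_mul]
  exact_mod_cast (intCast_zmod_eq_zero_iff_dvd _ _).1 this

theorem rho0_sq_mul [NeZero p] (k s : ℕ) (μ : ℤ) :
    rho0 k ((p : ℤ) ^ 2 * μ) p (s + 2) = p ^ k * rho k μ (p ^ s) := by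
  let π := castHom (dvd_mul_right (p ^ s) p) (ZMod (p ^ s))
  have hsum (y : Fin k → ZMod (p ^ s * p)) :
      ∑ i, ((p : ZMod (p * (p ^ s * p))) * (y i).val) ^ 2 = (((p : ℤ) ^ 2 * μ : ℤ) : ZMod _) ↔
        ∑ i, (π ∘ y) i ^ 2 = μ := by
    have h := intCast_mul_eq_intCast_mul_iff (a := p ^ 2) (b := p ^ s) (N := p * (p ^ s * p))
      (by ring) (NeZero.ne _) (∑ i, ((y i).val : ℤ) ^ 2) μ
    push_cast [Finset.mul_sum, mul_pow] at h
    simpa [π, map_natCast, mul_pow] using h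
  rw [rho0, pow_succ', pow_succ, Nat.card_subtype_and_eq_of_injective
    (natCast_mul_val_injective (a := p) (b := p ^ s * p)).comp_left fun x => by
      simp only [natCast_dvd_iff_exists_val, funext_iff, Function.comp_apply]
      exact Classical.skolem]
  refine (Nat.card_congr (Equiv.subtypeEquivRight hsum)).trans ?_
  rw [rho, mul_comm (p ^ k)]
  refine Nat.card_subtype_eq_mul_of_card_fiber (π ∘ ·) (Q := fun z => ∑ i, z i ^ 2 = (μ : ZMod _))
    (fun _ h => h) fun z hz => ?_
  have hfiber := card_fiber_castHom_comp (b := p) z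
  rw [Fintype.card_fin] at hfiber
  rw [← hfiber]
  exact Nat.card_congr (Equiv.subtypeEquivRight fun y => ⟨And.right, fun h => ⟨h ▸ hz, h⟩⟩)

theorem card_lifts_sum_sq_eq {a : ℕ} [NeZero a] [Fact p.Prime] (hp2 : p ≠ 2) (hpa : p ∣ a)
    {k : ℕ} {lam : ℤ} {y : Fin k → ZMod a} (hy : ∑ i, y i ^ 2 = lam)
    (hprim : ∃ i, ¬ (p : ZMod a) ∣ y i) :
    Nat.card {x : Fin k → ZMod (a * p) //
      ∑ i, x i ^ 2 = lam ∧ castHom (dvd_mul_right a p) (ZMod a) ∘ x = y} = p ^ (k - 1) := by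
  set π := castHom (dvd_mul_right a p) (ZMod a)
  set ρ := castHom (dvd_mul_left p a) (ZMod p)
  let x₀ : Fin k → ZMod (a * p) := fun i => (y i).val
  have hx₀ : π ∘ x₀ = y := funext fun i => by simp [π, x₀]
  rw [← hx₀, Nat.card_subtype_and_eq_of_injective (add_natCast_mul_val_injective x₀)
    (castHom_comp_eq_iff_exists_add x₀)]
  obtain ⟨c, hc⟩ : (a : ZMod (a * p)) ∣ ∑ i, x₀ i ^ 2 - lam := by
    rw [← castHom_eq_zero_iff_natCast_dvd (dvd_mul_right a p), map_sub, map_sum, map_intCast, ← hy]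
    simp [← hx₀, π]
  have ha2 : (a : ZMod (a * p)) ^ 2 = 0 := by
    exact_mod_cast (natCast_eq_zero_iff _ _).2 (by rw [sq]; exact mul_dvd_mul_left a hpa)
  have hlin (t : Fin k → ZMod p) : ∑ i, (x₀ i + a * (t i).val) ^ 2 = lam ↔
      (fun i => 2 * ρ (x₀ i)) ⬝ᵥ t = -ρ c := by
    have hexp : ∑ i, (x₀ i + a * (t i).val) ^ 2 - lam =
        a * (c + ∑ i, 2 * x₀ i * (t i).val) := by
      rw [mul_add, ← hc, Finset.mul_sum, sub_add_eq_add_sub, ← Finset.sum_add_distrib]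
      congr 1
      refine Finset.sum_congr rfl fun i _ => ?_
      linear_combination ((t i).val : ZMod (a * p)) ^ 2 * ha2
    rw [← sub_eq_zero, hexp, natCast_mul_eq_zero_iff, eq_neg_iff_add_eq_zero, add_comm, map_add,
      map_sum]
    simp only [map_mul, map_ofNat, map_natCast, natCast_zmod_val, dotProduct, mul_assoc]
    rfl
  obtain ⟨j, hj⟩ := hprim
  have hcoef : (fun i => 2 * ρ (x₀ i)) ≠ 0 := by
    refine Function.ne_iff.2 ⟨j, mul_ne_zero (Ring.two_ne_zero (by rwa [ringChar_zmod_n])) ?_⟩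
    rwa [Ne, castHom_eq_zero_iff_natCast_dvd, ← natCast_dvd_castHom_iff (dvd_mul_right a p) hpa,
      ← Function.comp_apply (f := π), hx₀]
  have hcard := card_dotProduct_eq_mul_card_eq_pow hcoef (-ρ c)
  rw [ZMod.card, Fintype.card_fin, ← pow_sub_one_mul (Fin.pos j).ne'] at hcard
  rw [Nat.card_congr (Equiv.subtypeEquivRight hlin)]
  exact Nat.eq_of_mul_eq_mul_right (Fact.out : p.Prime).pos hcard

theorem rho1_succ [Fact p.Prime] (hp2 : p ≠ 2) (k : ℕ) (lam : ℤ) {s : ℕ} (hs : s ≠ 0) :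
    rho1 k lam p (s + 1) = p ^ (k - 1) * rho1 k lam p s := by
  have hpa : p ∣ p ^ s := dvd_pow_self p hs
  let π := castHom (dvd_mul_right (p ^ s) p) (ZMod (p ^ s))
  rw [rho1, rho1, pow_succ, mul_comm (p ^ (k - 1))]
  refine Nat.card_subtype_eq_mul_of_card_fiber (π ∘ ·)
    (Q := fun y => ∑ i, y i ^ 2 = (lam : ZMod (p ^ s)) ∧ ∃ i, ¬ (p : ZMod (p ^ s)) ∣ y i)
    (fun x hx => ⟨?_, ?_⟩) fun y hy => ?_
  · simp only [Function.comp_apply, ← map_pow, ← map_sum, hx.1, map_intCast]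
  · obtain ⟨j, hj⟩ := hx.2
    exact ⟨j, (natCast_dvd_castHom_iff _ hpa _).not.2 hj⟩
  · obtain ⟨hy, j, hj⟩ := hy
    rw [← card_lifts_sum_sq_eq hp2 hpa hy ⟨j, hj⟩]
    refine Nat.card_congr (Equiv.subtypeEquivRight fun x => ⟨fun h => ⟨h.1.1, h.2⟩,
      fun h => ⟨⟨h.1, j, fun hdvd => hj ?_⟩, h.2⟩⟩)
    rw [← h.2]
    exact (natCast_dvd_castHom_iff _ hpa _).2 hdvd

theorem rho1_succ_eq_pow_mul [Fact p.Prime] (hp2 : p ≠ 2) (k : ℕ) (lam : ℤ) (s : ℕ) :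
    rho1 k lam p (s + 1) = p ^ (s * (k - 1)) * rho1 k lam p 1 := by
  induction s with
  | zero => simp
  | succ s ih => rw [rho1_succ hp2 k lam s.succ_ne_zero, ih, ← mul_assoc, ← pow_add,
    add_one_mul, add_comm (k - 1)]

theorem rho1_one_emod (k : ℕ) (lam : ℤ) : rho1 k (lam % p) p 1 = rho1 k lam p 1 := by
  have h : ((lam % p : ℤ) : ZMod (p ^ 1)) = lam := by rw [pow_one]; exact intCast_mod lam p
  rw [rho1, rho1, h]

theorem rho_pow_eq_sum_rho1 [NeZero p] {k r s : ℕ} {lam lam' : ℤ} (hlam' : ¬ (p : ℤ) ∣ lam')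
    (hrs : r < s) (hlam : lam = p ^ r * lam') :
    rho k lam (p ^ s) = ∑ i ∈ Finset.range (r / 2 + 1),
      p ^ (k * i) * rho1 k (lam / p ^ (2 * i)) p (s - 2 * i) := by
  induction r using Nat.strong_induction_on generalizing s lam with
  | _ r ih =>
  have hp : (p : ℤ) ≠ 0 := by exact_mod_cast NeZero.ne p
  rw [rho_pow_eq_rho1_add_rho0]
  rcases lt_or_ge r 2 with hr | hr
  · rw [rho0_eq_zero (m := r + 1) (by omega) hrs, Nat.div_eq_of_lt hr]
    · simp
    · rwa [hlam, pow_succ, mul_dvd_mul_iff_left (pow_ne_zero r hp)]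
  obtain ⟨r, rfl⟩ : ∃ r', r = r' + 2 := ⟨r - 2, by omega⟩
  obtain ⟨s, rfl⟩ : ∃ s', s = s' + 2 := ⟨s - 2, by omega⟩
  have hμ : lam = p ^ 2 * (p ^ r * lam') := by rw [hlam]; ring
  rw [hμ, rho0_sq_mul, ih r (by omega) (s := s) (by omega) rfl, Finset.mul_sum,
    show (r + 2) / 2 + 1 = r / 2 + 1 + 1 by omega, Finset.sum_range_succ' _ (r / 2 + 1),
    add_comm (rho1 _ _ _ _)]
  congr 1
  · refine Finset.sum_congr rfl fun i _ => ?_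
    rw [show 2 * (i + 1) = 2 + 2 * i by ring, pow_add, Int.mul_ediv_mul_of_pos _ _ (by positivity),
      show s + 2 - (2 + 2 * i) = s - 2 * i by omega]
    ring
  · simp

end

theorem rho_odd_prime_pow_nonzero_general (p : ℕ) (hp : p.Prime) (hodd : Odd p) (k : ℕ)
    (s : ℕ) (lam : ℤ)
    (r : ℕ) (lam' : ℤ) (hr : r < s) (hfac : lam = (p : ℤ) ^ r * lam') (hnd : ¬ (p : ℤ) ∣ lam') :
    rho k lam (p ^ s) =
      ∑ i ∈ Finset.range (r / 2 + 1),
        p ^ (k * i + (s - 2 * i - 1) * (k - 1)) * rho1 k ((lam / (p : ℤ) ^ (2 * i)) % p) p 1 := by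
  have := Fact.mk hp
  have hp2 : p ≠ 2 := by
    rintro rfl
    exact Nat.not_odd_iff_even.2 even_two hodd
  rw [rho_pow_eq_sum_rho1 hnd hr hfac]
  refine Finset.sum_congr rfl fun i hi => ?_
  have hsi : s - 2 * i = s - 2 * i - 1 + 1 := by
    have := Finset.mem_range.1 hi
    omega
  rw [hsi, rho1_succ_eq_pow_mul hp2, rho1_one_emod, ← mul_assoc, ← pow_add, Nat.add_sub_cancel]

/-- For an odd prime `p` and `λ = p^r·λ'` with `p ∤ λ'`,
`ρ_{k,λ}(p^s) = Σ_{i=0}^{⌊r/2⌋} p^{ki+(s−2i−1)(k−1)} · ρ^{(1)}_{k,(λ/p^{2i}) mod p}(p)`. -/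
theorem rho_odd_prime_pow_nonzero (p : ℕ) (hp : p.Prime) (hodd : Odd p) (k : ℕ) (hk : 0 < k)
    (s : ℕ) (hs : 1 ≤ s) (lam : ℤ) (hlam0 : 0 < lam) (hlam1 : lam < (p : ℤ) ^ s)
    (r : ℕ) (lam' : ℤ) (hr : r < s) (hfac : lam = (p : ℤ) ^ r * lam') (hnd : ¬ (p : ℤ) ∣ lam') :
    rho k lam (p ^ s) =
      ∑ i ∈ Finset.range (r / 2 + 1),
        p ^ (k * i + (s - 2 * i - 1) * (k - 1)) * rho1 k ((lam / (p : ℤ) ^ (2 * i)) % p) p 1 :=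
  rho_odd_prime_pow_nonzero_general p hp hodd k s lam r lam' hr hfac hnd
end

section
/- Let k be a positive integer, s ≥ 1 an integer, and λ an integer with 0 < λ < 2^s. Write λ = 2^r·λ' with 0 ≤ r < s and λ' odd. Then ρ_{k,λ}(2^s) = Σ_{i=0}^{⌊r/2⌋−1} 2^{ki + (s−2i−3)(k−1)} · ρ^(1)_{k, (λ/2^{2i}) mod 8}(8) + 2^{k·⌊r/2⌋} · ρ^(1)_{k, λ/2^{2⌊r/2⌋}}(2^{s−2⌊r/2⌋}), where the sum is empty when ⌊r/2⌋ = 0. -/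
set_option linter.unusedSectionVars false
set_option linter.unusedVariables false
set_option maxHeartbeats 1000000


open Finset

section Counting
variable {M N : Type*} [AddCommGroup M] [AddCommGroup N] [Fintype M] [Fintype N]

lemma fiber_card (f : M →+ N) (hf : Function.Surjective f) (b : N) :
    Nat.card {a : M // f a = b} = Nat.card {a : M // f a = 0} := by
  obtain ⟨a₀, ha₀⟩ := hf b
  refine Nat.card_congr ⟨fun x => ⟨x.1 - a₀, by simp [map_sub, x.2, ha₀]⟩,
    fun x => ⟨x.1 + a₀, by simp [map_add, x.2, ha₀]⟩, fun x => ?_, fun x => ?_⟩ <;>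
  · ext; simp

lemma card_comp (f : M →+ N) (hf : Function.Surjective f) (p : N → Prop) :
    Nat.card {a : M // p (f a)} = Nat.card {a : M // f a = 0} * Nat.card {b : N // p b} := by
  classical
  let g : {a : M // p (f a)} → {b : N // p b} := fun a => ⟨f a.1, a.2⟩
  have e1 : (Σ b : {b : N // p b}, {a : {a : M // p (f a)} // g a = b}) ≃ {a : M // p (f a)} :=
    Equiv.sigmaFiberEquiv g
  have e2 : ∀ b : {b : N // p b}, {a : {a : M // p (f a)} // g a = b} ≃ {a : M // f a = b.1} := by
    intro b
    refine ⟨fun x => ⟨x.1.1, by have := x.2; simpa [g, Subtype.ext_iff] using this⟩,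
      fun a => ⟨⟨a.1, by rw [a.2]; exact b.2⟩, by simp [g, Subtype.ext_iff, a.2]⟩,
      fun x => by ext; rfl, fun a => by ext; rfl⟩
  have h1 := Nat.card_congr e1
  rw [← h1, Nat.card_eq_fintype_card, Fintype.card_sigma]
  have h2 : ∀ b : {b : N // p b}, Fintype.card {a : {a : M // p (f a)} // g a = b}
      = Nat.card {a : M // f a = 0} := by
    intro b
    rw [← Nat.card_eq_fintype_card, Nat.card_congr (e2 b), fiber_card f hf]
  rw [Finset.sum_congr rfl (fun b _ => h2 b), Finset.sum_const, smul_eq_mul]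
  rw [show (univ : Finset {b : N // p b}).card = Nat.card {b : N // p b} by
    rw [Nat.card_eq_fintype_card, Fintype.card]]
  ring

lemma card_comp_total (f : M →+ N) (hf : Function.Surjective f) :
    Fintype.card M = Nat.card {a : M // f a = 0} * Fintype.card N := by
  have h := card_comp f hf (fun _ => True)
  have eM : Nat.card {a : M // True} = Fintype.card M := by
    rw [Nat.card_congr (Equiv.subtypeUnivEquiv (fun _ => trivial)), Nat.card_eq_fintype_card]
  have eN : Nat.card {b : N // True} = Fintype.card N := by
    rw [Nat.card_congr (Equiv.subtypeUnivEquiv (fun _ => trivial)), Nat.card_eq_fintype_card]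
  rw [eM, eN] at h
  exact h

lemma card_split' {α : Type*} [Finite α] (q r : α → Prop) :
    Nat.card {a // q a} = Nat.card {a // q a ∧ r a} + Nat.card {a // q a ∧ ¬ r a} := by
  classical
  rw [← Nat.card_sum]
  refine Nat.card_congr ?_
  exact (((Equiv.subtypeSubtypeEquivSubtypeInter q r).symm.sumCongr
    (Equiv.subtypeSubtypeEquivSubtypeInter q (fun a => ¬ r a)).symm).trans
    (Equiv.sumCompl (fun x : {a // q a} => r x.1))).symm

end Counting


lemma zmod_intCast_eq_iff (n : ℕ) (a b : ℤ) :
    (a : ZMod n) = (b : ZMod n) ↔ (n : ℤ) ∣ b - a := by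
  rw [ZMod.intCast_eq_intCast_iff, Int.modEq_iff_dvd]

lemma zmod_two_dvd_iff {m : ℕ} [NeZero m] (hm : 2 ∣ m) (x : ZMod m) :
    (2 : ZMod m) ∣ x ↔ 2 ∣ x.val := by
  constructor
  · rintro ⟨c, rfl⟩
    rw [ZMod.val_mul]
    refine (Nat.dvd_mod_iff hm).2 (Dvd.dvd.mul_right ?_ _)
    have h2 : (2 : ZMod m) = ((2:ℕ) : ZMod m) := by norm_cast
    rw [h2, ZMod.val_natCast]
    exact (Nat.dvd_mod_iff hm).2 dvd_rfl
  · rintro ⟨d, hd⟩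
    refine ⟨(d : ZMod m), ?_⟩
    have : ((x.val : ℕ) : ZMod m) = x := by simp [ZMod.natCast_val, ZMod.cast_id]
    rw [← this, hd]
    push_cast
    ring

lemma zmod_castHom_surj (a b : ℕ) [NeZero a] (h : a ∣ b) :
    Function.Surjective (ZMod.castHom h (ZMod a)) := by
  intro y
  refine ⟨(y.val : ZMod b), ?_⟩
  rw [map_natCast, ZMod.natCast_val, ZMod.cast_id]

section PiCast
variable (k t u : ℕ)

noncomputable def piCast : (Fin k → ZMod (2^(t+u))) →+ (Fin k → ZMod (2^t)) where
  toFun := fun x i => ZMod.castHom (pow_dvd_pow 2 (Nat.le_add_right t u)) (ZMod (2^t)) (x i)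
  map_zero' := by funext i; simp
  map_add' := by intro x y; funext i; exact map_add (ZMod.castHom (pow_dvd_pow 2 (Nat.le_add_right t u)) (ZMod (2^t))) _ _

lemma piCast_surj : Function.Surjective (piCast k t u) := by
  intro y
  refine ⟨fun i => ((y i).val : ZMod (2^(t+u))), ?_⟩
  funext i
  show ZMod.castHom (pow_dvd_pow 2 (Nat.le_add_right t u)) (ZMod (2^t)) _ = _
  rw [map_natCast, ZMod.natCast_val, ZMod.cast_id]

lemma piCast_apply (x : Fin k → ZMod (2^(t+u))) (i : Fin k) :
    piCast k t u x i = (((x i).val : ℕ) : ZMod (2^t)) := by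
  show ZMod.castHom (pow_dvd_pow 2 (Nat.le_add_right t u)) (ZMod (2^t)) _ = _
  rw [ZMod.castHom_apply, ZMod.natCast_val]


lemma card_comp_pi (p : (Fin k → ZMod (2^t)) → Prop) :
    Nat.card {x : Fin k → ZMod (2^(t+u)) // p (piCast k t u x)}
      = 2^(u*k) * Nat.card {y : Fin k → ZMod (2^t) // p y} := by
  have hker : Nat.card {x : Fin k → ZMod (2^(t+u)) // piCast k t u x = 0} = 2^(u*k) := by
    have htot := card_comp_total (piCast k t u) (piCast_surj k t u)
    rw [Fintype.card_pi, Fintype.card_pi] at htot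
    simp only [ZMod.card, Finset.prod_const, Finset.card_univ, Fintype.card_fin] at htot
    have hpos : 0 < (2^t)^k := by positivity
    refine Nat.eq_of_mul_eq_mul_right hpos ?_
    rw [← htot]
    rw [← pow_mul, ← pow_mul, ← pow_add]
    ring_nf
  rw [card_comp (piCast k t u) (piCast_surj k t u) p, hker]

end PiCast


lemma int_sq_diff (t : ℕ) (a : ℤ) :
    (2^(t+4) : ℤ) ∣ a^2 - (a % 2^(t+3))^2 := by
  set q : ℤ := a / 2^(t+3) with hq
  have hmod : a % 2^(t+3) = a - 2^(t+3) * q := by rw [Int.emod_def]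
  refine ⟨q * a - 2^(t+2) * q^2, ?_⟩
  rw [hmod]; ring

lemma int_sq_shift (t : ℕ) (v w : ℤ) (hodd : Odd v)
    (hw : w = (v + 2^(t+2)) % 2^(t+3)) :
    (2^(t+4) : ℤ) ∣ w^2 - v^2 - 2^(t+3) := by
  obtain ⟨u, hu⟩ := hodd
  set q : ℤ := (v + 2^(t+2)) / 2^(t+3) with hq
  have hw' : w = v + 2^(t+2) - 2^(t+3) * q := by rw [hw, Int.emod_def]
  refine ⟨u - v*q + 2^t + 2^(t+2)*(q^2 - q), ?_⟩
  rw [hw', hu]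
  ring

lemma rho_eq_rho1 (k s : ℕ) (hs : 1 ≤ s) (lam : ℤ)
    (h : ¬ ((2:ℤ) ^ (min s 2)) ∣ lam) : rho k lam (2^s) = rho1 k lam 2 s := by
  rw [rho, rho1]
  refine Nat.card_congr (Equiv.subtypeEquivRight fun x => ?_)
  rw [iff_iff_implies_and_implies]
  refine ⟨fun hx => ⟨hx, ?_⟩, fun hx => hx.1⟩
  by_contra hall
  push_neg at hall
  set m := min s 2 with hm
  have hdvd : (2:ℕ)^m ∣ 2^s := pow_dvd_pow 2 (min_le_left s 2)
  have hm2 : (2:ℕ)^m ∣ 4 := by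
    calc (2:ℕ)^m ∣ 2^2 := pow_dvd_pow 2 (min_le_right s 2)
    _ = 4 := by norm_num
  let φ := ZMod.castHom hdvd (ZMod (2^m))
  have key : ∀ i, (φ (x i))^2 = 0 := by
    intro i
    obtain ⟨c, hc⟩ := hall i
    have : φ (x i) = 2 * φ c := by
      rw [hc, map_mul, map_natCast]
      norm_num
    rw [this]
    have h4 : ((4:ℕ) : ZMod (2^m)) = 0 := (ZMod.natCast_eq_zero_iff 4 (2^m)).2 hm2
    have : ((2:ZMod (2^m)) * φ c)^2 = ((4:ℕ) : ZMod (2^m)) * (φ c)^2 := by push_cast; ring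
    rw [this, h4, zero_mul]
  have h0 : ((lam : ℤ) : ZMod (2^m)) = 0 := by
    have := congrArg φ hx
    rw [map_sum, map_intCast] at this
    rw [← this]
    refine Finset.sum_eq_zero fun i _ => ?_
    rw [map_pow]
    exact key i
  rw [ZMod.intCast_zmod_eq_zero_iff_dvd] at h0
  exact h (by push_cast at h0 ⊢; exact h0)

lemma sum_val_sq (k n : ℕ) [NeZero n] (x : Fin k → ZMod n) :
    ∑ i, x i ^ 2 = ((∑ i, (x i).val ^ 2 : ℕ) : ZMod n) := by
  push_cast [ZMod.natCast_val, ZMod.cast_id]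
  rfl

lemma even_part (k t : ℕ) (mu : ℤ) :
    Nat.card {x : Fin k → ZMod (2^(t+2)) //
        (∑ i, x i ^ 2 = ((4*mu : ℤ) : ZMod (2^(t+2)))) ∧ ∀ i, 2 ∣ (x i).val}
      = 2^k * rho k mu (2^t) := by
  have key : ∀ v : Fin k → ℕ,
      (((∑ i, (2 * v i)^2 : ℕ) : ZMod (2^(t+2))) = ((4*mu : ℤ) : ZMod (2^(t+2)))) ↔
      (((∑ i, (v i)^2 : ℕ) : ZMod (2^t)) = (mu : ZMod (2^t))) := by
    intro v
    have l1 : ((∑ i, (2 * v i)^2 : ℕ) : ZMod (2^(t+2)))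
        = (((4 * (∑ i, (v i)^2 : ℕ) : ℤ)) : ZMod (2^(t+2))) := by
      push_cast
      rw [Finset.mul_sum]
      exact Finset.sum_congr rfl fun i _ => by ring
    have l2 : ((∑ i, (v i)^2 : ℕ) : ZMod (2^t))
        = ((((∑ i, (v i)^2 : ℕ) : ℤ)) : ZMod (2^t)) := by push_cast; ring
    rw [l1, l2, zmod_intCast_eq_iff, zmod_intCast_eq_iff]
    rw [show ((2^(t+2) : ℕ) : ℤ) = 4 * 2^t by push_cast; ring,
      show (4*mu - 4 * ((∑ i, (v i)^2 : ℕ) : ℤ)) = 4 * (mu - ((∑ i, (v i)^2 : ℕ) : ℤ)) by ring,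
      mul_dvd_mul_iff_left (by norm_num : (4:ℤ) ≠ 0)]
    push_cast
    rfl
  have hvlt2 : ∀ x : ZMod (2^(t+2)), x.val / 2 < 2^(t+1) := by
    intro x
    have h1 := ZMod.val_lt x
    have h2 : (2:ℕ)^(t+2) = 2^(t+1)*2 := by ring
    omega
  have hcast_val : ∀ (n : ℕ) [NeZero n] (a : ℕ), a < n → ((a : ZMod n)).val = a :=
    fun n _ a h => ZMod.val_cast_of_lt h
  have hwlt : ∀ y : ZMod (2^(t+1)), 2 * y.val < 2^(t+2) := by
    intro y
    have h1 := ZMod.val_lt y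
    have h2 : (2:ℕ)^(t+2) = 2^(t+1)*2 := by ring
    omega
  have hroundtrip : ∀ (n : ℕ) [NeZero n] (x : ZMod n), ((x.val : ℕ) : ZMod n) = x := by
    intro n _ x; rw [ZMod.natCast_val, ZMod.cast_id]
  -- the equivalence with y-space
  have e : {x : Fin k → ZMod (2^(t+2)) //
        (∑ i, x i ^ 2 = ((4*mu : ℤ) : ZMod (2^(t+2)))) ∧ ∀ i, 2 ∣ (x i).val}
      ≃ {y : Fin k → ZMod (2^(t+1)) //
        ((∑ i, (y i).val ^ 2 : ℕ) : ZMod (2^t)) = (mu : ZMod (2^t))} := by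
    refine ⟨fun x => ⟨fun i => (((x.1 i).val / 2 : ℕ) : ZMod (2^(t+1))), ?_⟩,
      fun y => ⟨fun i => ((2 * (y.1 i).val : ℕ) : ZMod (2^(t+2))), ?_, ?_⟩, ?_, ?_⟩
    · -- forward membership
      obtain ⟨hsum, hev⟩ := x.2
      have hv : ∀ i, ((((x.1 i).val / 2 : ℕ) : ZMod (2^(t+1)))).val = (x.1 i).val / 2 :=
        fun i => hcast_val _ _ (hvlt2 (x.1 i))
      simp only [hv]
      refine (key (fun i => (x.1 i).val / 2)).1 ?_
      have : ∀ i, 2 * ((x.1 i).val / 2) = (x.1 i).val := fun i => Nat.two_mul_div_two_of_even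
        (even_iff_two_dvd.2 (hev i))
      calc ((∑ i, (2 * ((x.1 i).val / 2))^2 : ℕ) : ZMod (2^(t+2)))
          = ((∑ i, (x.1 i).val ^2 : ℕ) : ZMod (2^(t+2))) := by
            congr 1; exact Finset.sum_congr rfl fun i _ => by rw [this i]
        _ = ∑ i, x.1 i ^ 2 := (sum_val_sq _ _ _).symm
        _ = _ := hsum
    · -- inverse membership: sum
      have hv : ∀ i, (((2 * (y.1 i).val : ℕ) : ZMod (2^(t+2)))).val = 2 * (y.1 i).val :=
        fun i => hcast_val _ _ (hwlt (y.1 i))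
      rw [sum_val_sq]
      simp only [hv]
      exact (key (fun i => (y.1 i).val)).2 y.2
    · -- inverse membership: even
      intro i
      rw [hcast_val _ _ (hwlt (y.1 i))]
      exact ⟨_, rfl⟩
    · -- left inverse
      intro x
      ext i
      have hev := x.2.2 i
      have hv : ((((x.1 i).val / 2 : ℕ) : ZMod (2^(t+1)))).val = (x.1 i).val / 2 :=
        hcast_val _ _ (hvlt2 (x.1 i))
      show ((2 * (((( x.1 i).val / 2 : ℕ) : ZMod (2^(t+1)))).val : ℕ) : ZMod (2^(t+2))) = x.1 i
      rw [hv, Nat.two_mul_div_two_of_even (even_iff_two_dvd.2 hev), hroundtrip]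
    · -- right inverse
      intro y
      ext i
      have hv : (((2 * (y.1 i).val : ℕ) : ZMod (2^(t+2)))).val = 2 * (y.1 i).val :=
        hcast_val _ _ (hwlt (y.1 i))
      show (((((2 * (y.1 i).val : ℕ) : ZMod (2^(t+2)))).val / 2 : ℕ) : ZMod (2^(t+1))) = y.1 i
      rw [hv, Nat.mul_div_cancel_left _ (by norm_num), hroundtrip]
  rw [Nat.card_congr e]
  -- now relate to piCast condition and apply card_comp_pi
  have e2 : ∀ y : Fin k → ZMod (2^(t+1)),
      (((∑ i, (y i).val ^ 2 : ℕ) : ZMod (2^t)) = (mu : ZMod (2^t))) ↔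
      (∑ i, (piCast k t 1 y) i ^ 2 = (mu : ZMod (2^t))) := by
    intro y
    have : ∑ i, (piCast k t 1 y) i ^ 2 = ((∑ i, (y i).val ^ 2 : ℕ) : ZMod (2^t)) := by
      simp only [piCast_apply]
      push_cast
      rfl
    rw [this]
  rw [Nat.card_congr (Equiv.subtypeEquivRight e2)]
  rw [card_comp_pi k t 1 (fun z => ∑ i, z i ^ 2 = (mu : ZMod (2^t))), one_mul, rho]

lemma rho_rec (k t : ℕ) (mu : ℤ) :
    rho k (4*mu) (2^(t+2)) = rho1 k (4*mu) 2 (t+2) + 2^k * rho k mu (2^t) := by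
  rw [rho, rho1,
    card_split' (fun x : Fin k → ZMod (2^(t+2)) => ∑ i, x i ^ 2 = ((4*mu : ℤ) : ZMod (2^(t+2))))
      (fun x => ∃ i, ¬ ((2:ℕ) : ZMod (2^(t+2))) ∣ x i)]
  congr 1
  rw [← even_part k t mu]
  refine Nat.card_congr (Equiv.subtypeEquivRight fun x => ?_)
  have : (¬ ∃ i, ¬ ((2:ℕ) : ZMod (2^(t+2))) ∣ x i) ↔ ∀ i, 2 ∣ (x i).val := by
    push_neg
    have h2 : ((2:ℕ) : ZMod (2^(t+2))) = (2 : ZMod (2^(t+2))) := by norm_cast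
    have hd : (2:ℕ) ∣ 2^(t+2) := ⟨2^(t+1), by ring⟩
    constructor
    · exact fun h i => (zmod_two_dvd_iff hd (x i)).1 (h2 ▸ h i)
    · exact fun h i => h2 ▸ (zmod_two_dvd_iff hd (x i)).2 (h i)
  rw [this]

-- (b) cast-sum invariance under reduction
lemma cast_sum_vals (k t : ℕ) (x : Fin k → ZMod (2^((t+3)+1))) :
    ((∑ i, (piCast k (t+3) 1 x i).val^2 : ℕ) : ZMod (2^(t+4)))
      = ((∑ i, (x i).val^2 : ℕ) : ZMod (2^(t+4))) := by
  rw [show ((∑ i, (piCast k (t+3) 1 x i).val^2 : ℕ) : ZMod (2^(t+4)))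
      = (((∑ i, (piCast k (t+3) 1 x i).val^2 : ℕ) : ℤ) : ZMod (2^(t+4))) by push_cast; rfl,
    show ((∑ i, (x i).val^2 : ℕ) : ZMod (2^(t+4)))
      = (((∑ i, (x i).val^2 : ℕ) : ℤ) : ZMod (2^(t+4))) by push_cast; rfl,
    zmod_intCast_eq_iff]
  push_cast
  rw [← Finset.sum_sub_distrib]
  refine Finset.dvd_sum fun i _ => ?_
  have hval : (piCast k (t+3) 1 x i).val = (x i).val % 2^(t+3) := by
    rw [piCast_apply, ZMod.val_natCast]
  rw [hval]
  push_cast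
  exact int_sq_diff t ((x i).val : ℤ)

lemma prim_transfer (k t : ℕ) (x : Fin k → ZMod (2^((t+3)+1))) (i : Fin k) :
    (¬ ((2:ℕ) : ZMod (2^(t+4))) ∣ x i) ↔ ¬ ((2:ℕ) : ZMod (2^(t+3))) ∣ piCast k (t+3) 1 x i := by
  have h2M : (((2:ℕ)) : ZMod (2^(t+4))) = (2 : ZMod (2^(t+4))) := by norm_cast
  have h2N : (((2:ℕ)) : ZMod (2^(t+3))) = (2 : ZMod (2^(t+3))) := by norm_cast
  have hdM : (2:ℕ) ∣ 2^(t+4) := ⟨2^(t+3), by ring⟩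
  have hdN : (2:ℕ) ∣ 2^(t+3) := ⟨2^(t+2), by ring⟩
  have hval : (piCast k (t+3) 1 x i).val = (x i).val % 2^(t+3) := by
    rw [piCast_apply, ZMod.val_natCast]
  rw [h2M, h2N,
    zmod_two_dvd_iff hdM (show ZMod (2^(t+4)) from x i),
    zmod_two_dvd_iff hdN, hval, Nat.dvd_mod_iff hdN]

-- the predicate p₀ / p₁
def psum (k t : ℕ) (c : ℤ) (y : Fin k → ZMod (2^(t+3))) : Prop :=
  ((∑ i, (y i).val^2 : ℕ) : ZMod (2^(t+4))) = (c : ZMod (2^(t+4)))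

def pprim (k t : ℕ) (y : Fin k → ZMod (2^(t+3))) : Prop :=
  ∃ i, ¬ ((2:ℕ) : ZMod (2^(t+3))) ∣ y i

lemma step1 (k t : ℕ) (lam : ℤ) :
    rho1 k lam 2 (t+4)
      = 2^k * Nat.card {y : Fin k → ZMod (2^(t+3)) // psum k t lam y ∧ pprim k t y} := by
  have key : ∀ x : Fin k → ZMod (2^((t+3)+1)),
      ((∑ i, x i ^ 2 = ((lam : ℤ) : ZMod (2^((t+3)+1)))) ∧ ∃ i, ¬ ((2:ℕ) : ZMod (2^((t+3)+1))) ∣ x i)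
        ↔ (psum k t lam (piCast k (t+3) 1 x) ∧ pprim k t (piCast k (t+3) 1 x)) := by
    intro x
    constructor
    · rintro ⟨h1, i, h2⟩
      refine ⟨?_, ⟨i, (prim_transfer k t x i).1 h2⟩⟩
      rw [psum, cast_sum_vals, ← sum_val_sq]
      exact h1
    · rintro ⟨h1, i, h2⟩
      refine ⟨?_, ⟨i, (prim_transfer k t x i).2 h2⟩⟩
      rw [sum_val_sq, ← cast_sum_vals]
      exact h1
  have : rho1 k lam 2 (t+4)
      = Nat.card {x : Fin k → ZMod (2^((t+3)+1)) //
          psum k t lam (piCast k (t+3) 1 x) ∧ pprim k t (piCast k (t+3) 1 x)} := by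
    rw [rho1]
    exact Nat.card_congr (Equiv.subtypeEquivRight key)
  rw [this, card_comp_pi k (t+3) 1 (fun y => psum k t lam y ∧ pprim k t y), one_mul]

def Sset (k t : ℕ) (y : Fin k → ZMod (2^(t+3))) : Finset (Fin k) :=
  Finset.univ.filter (fun i => ¬ 2 ∣ (y i).val)

lemma pprim_iff_Sset (k t : ℕ) (y : Fin k → ZMod (2^(t+3))) :
    pprim k t y ↔ (Sset k t y).Nonempty := by
  have hdN : (2:ℕ) ∣ 2^(t+3) := ⟨2^(t+2), by ring⟩
  have h2N : (((2:ℕ)) : ZMod (2^(t+3))) = (2 : ZMod (2^(t+3))) := by norm_cast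
  unfold pprim Sset
  rw [Finset.filter_nonempty_iff]
  constructor
  · rintro ⟨i, hi⟩
    exact ⟨i, Finset.mem_univ i, fun h => hi (h2N ▸ (zmod_two_dvd_iff hdN (y i)).2 h)⟩
  · rintro ⟨i, _, hi⟩
    exact ⟨i, fun h => hi ((zmod_two_dvd_iff hdN (y i)).1 (h2N ▸ h))⟩

noncomputable def iot (k t : ℕ) (y : Fin k → ZMod (2^(t+3))) : Fin k → ZMod (2^(t+3)) :=
  if h : (Sset k t y).Nonempty then
    Function.update y ((Sset k t y).min' h)
      (y ((Sset k t y).min' h) + ((2^(t+2) : ℕ) : ZMod (2^(t+3))))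
  else y

lemma val_two_pow (t : ℕ) : (((2^(t+2) : ℕ)) : ZMod (2^(t+3))).val = 2^(t+2) := by
  rw [ZMod.val_natCast,
    Nat.mod_eq_of_lt (Nat.pow_lt_pow_right (by norm_num) (by omega))]

lemma iot_val_parity (k t : ℕ) (y : Fin k → ZMod (2^(t+3))) (i : Fin k) :
    2 ∣ (iot k t y i).val ↔ 2 ∣ (y i).val := by
  unfold iot
  split
  · rename_i h
    rcases eq_or_ne i ((Sset k t y).min' h) with rfl | hne
    · rw [Function.update_self, ZMod.val_add, val_two_pow]
      rw [Nat.dvd_mod_iff ⟨2^(t+2), by ring⟩]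
      have he : (2:ℕ) ∣ 2^(t+2) := ⟨2^(t+1), by ring⟩
      constructor <;> intro hd <;> omega
    · rw [Function.update_of_ne hne]
  · rfl

lemma iot_Sset (k t : ℕ) (y : Fin k → ZMod (2^(t+3))) :
    Sset k t (iot k t y) = Sset k t y := by
  unfold Sset
  apply Finset.filter_congr
  intro i _
  rw [iot_val_parity]

lemma iot_iot (k t : ℕ) (y : Fin k → ZMod (2^(t+3))) : iot k t (iot k t y) = y := by
  by_cases h : (Sset k t y).Nonempty
  · have h2 : (Sset k t (iot k t y)).Nonempty := by rw [iot_Sset]; exact h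
    rw [iot, dif_pos h2]
    have hj : (Sset k t (iot k t y)).min' h2 = (Sset k t y).min' h := by
      congr 1; exact iot_Sset k t y
    rw [hj]
    set j := (Sset k t y).min' h with hjdef
    have hit : iot k t y = Function.update y j (y j + ((2^(t+2) : ℕ) : ZMod (2^(t+3)))) := by
      rw [iot, dif_pos h]
    rw [hit, Function.update_self, Function.update_idem]
    have : y j + ((2^(t+2) : ℕ) : ZMod (2^(t+3))) + ((2^(t+2) : ℕ) : ZMod (2^(t+3))) = y j := by
      have : ((2^(t+2) : ℕ) : ZMod (2^(t+3))) + ((2^(t+2) : ℕ) : ZMod (2^(t+3)))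
          = ((2^(t+3) : ℕ) : ZMod (2^(t+3))) := by push_cast; ring
      rw [add_assoc, this, ZMod.natCast_self, add_zero]
    rw [this, Function.update_eq_self]
  · have h2 : ¬ (Sset k t (iot k t y)).Nonempty := by rw [iot_Sset]; exact h
    rw [iot, dif_neg h2, iot, dif_neg h]

lemma psum_ext (k t : ℕ) (c c' : ℤ) (hcc : (c : ZMod (2^(t+4))) = (c' : ZMod (2^(t+4))))
    (y : Fin k → ZMod (2^(t+3))) : psum k t c y ↔ psum k t c' y := by
  unfold psum; rw [hcc]

lemma iot_pprim (k t : ℕ) (y : Fin k → ZMod (2^(t+3))) :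
    pprim k t (iot k t y) ↔ pprim k t y := by
  rw [pprim_iff_Sset, pprim_iff_Sset, iot_Sset]

lemma iot_psum (k t : ℕ) (c : ℤ) (y : Fin k → ZMod (2^(t+3)))
    (hy : pprim k t y) (h : psum k t c y) : psum k t (c + 2^(t+3)) (iot k t y) := by
  have hne := (pprim_iff_Sset k t y).1 hy
  set j := (Sset k t y).min' hne with hjdef
  have hit : iot k t y = Function.update y j (y j + ((2^(t+2) : ℕ) : ZMod (2^(t+3)))) := by
    rw [iot, dif_pos hne]
  set w := (y j + ((2^(t+2) : ℕ) : ZMod (2^(t+3)))).val with hwdef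
  set v := (y j).val with hvdef
  have hs1 : ∑ i, (iot k t y i).val ^ 2
      = w^2 + ∑ i ∈ Finset.univ.erase j, (y i).val^2 := by
    rw [← Finset.add_sum_erase Finset.univ _ (Finset.mem_univ j)]
    congr 1
    · rw [hit, Function.update_self]
    · refine Finset.sum_congr rfl fun i hi => ?_
      rw [hit, Function.update_of_ne (Finset.ne_of_mem_erase hi)]
  have hs2 : ∑ i, (y i).val ^ 2 = v^2 + ∑ i ∈ Finset.univ.erase j, (y i).val^2 :=
    (Finset.add_sum_erase Finset.univ _ (Finset.mem_univ j)).symm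
  -- key congruence in ZMod (2^(t+4))
  have hw : w = (v + 2^(t+2)) % 2^(t+3) := by
    rw [hwdef, ZMod.val_add, val_two_pow]
  have hvodd : Odd (v : ℤ) := by
    rw [Int.odd_coe_nat, Nat.odd_iff]
    have hj : j ∈ Sset k t y := Finset.min'_mem _ hne
    have hj2 : ¬ 2 ∣ v := (Finset.mem_filter.mp hj).2
    omega
  have hkey : (2^(t+4) : ℤ) ∣ ((v:ℤ)^2 + 2^(t+3)) - (w:ℤ)^2 := by
    have := int_sq_shift t (v:ℤ) (w:ℤ) hvodd (by push_cast [hw]; ring)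
    have h2 : ((v:ℤ)^2 + 2^(t+3)) - (w:ℤ)^2 = -((w:ℤ)^2 - (v:ℤ)^2 - 2^(t+3)) := by ring
    rw [h2]
    exact this.neg_right
  unfold psum at h ⊢
  rw [hs1]
  rw [hs2] at h
  have hcast : ((w^2 + ∑ i ∈ Finset.univ.erase j, (y i).val^2 : ℕ) : ZMod (2^(t+4)))
      = ((v^2 + ∑ i ∈ Finset.univ.erase j, (y i).val^2 : ℕ) : ZMod (2^(t+4)))
        + ((2^(t+3) : ℤ) : ZMod (2^(t+4))) := by
    have hstep : ((w^2 : ℕ) : ZMod (2^(t+4)))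
        = ((v^2 : ℕ) : ZMod (2^(t+4))) + ((2^(t+3) : ℤ) : ZMod (2^(t+4))) := by
      have l1 : ((w^2 : ℕ) : ZMod (2^(t+4))) = (((w:ℤ)^2 : ℤ) : ZMod (2^(t+4))) := by
        push_cast; ring
      have l2 : ((v^2 : ℕ) : ZMod (2^(t+4))) + ((2^(t+3) : ℤ) : ZMod (2^(t+4)))
          = ((((v:ℤ)^2 + 2^(t+3)) : ℤ) : ZMod (2^(t+4))) := by push_cast; ring
      rw [l1, l2, zmod_intCast_eq_iff]
      exact_mod_cast hkey
    push_cast at hstep ⊢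
    rw [hstep]
    ring
  rw [hcast, h]
  push_cast
  ring

lemma card_psum_swap (k t : ℕ) (lam : ℤ) :
    Nat.card {y : Fin k → ZMod (2^(t+3)) // psum k t lam y ∧ pprim k t y}
      = Nat.card {y : Fin k → ZMod (2^(t+3)) // psum k t (lam + 2^(t+3)) y ∧ pprim k t y} := by
  have hzero : ((lam + 2^(t+3) + 2^(t+3) : ℤ) : ZMod (2^(t+4))) = ((lam : ℤ) : ZMod (2^(t+4))) := by
    rw [zmod_intCast_eq_iff]
    exact ⟨-1, by push_cast; ring⟩
  refine Nat.card_congr ⟨fun y => ⟨iot k t y.1, iot_psum k t lam y.1 y.2.2 y.2.1,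
      (iot_pprim k t y.1).2 y.2.2⟩,
    fun y => ⟨iot k t y.1, ?_, (iot_pprim k t y.1).2 y.2.2⟩,
    fun y => Subtype.ext (iot_iot k t y.1), fun y => Subtype.ext (iot_iot k t y.1)⟩
  have := iot_psum k t (lam + 2^(t+3)) y.1 y.2.2 y.2.1
  exact (psum_ext k t _ _ hzero _).1 this

lemma psum_to_sol (k t : ℕ) (c : ℤ) (y : Fin k → ZMod (2^(t+3))) (h : psum k t c y) :
    ∑ i, y i ^ 2 = ((c : ℤ) : ZMod (2^(t+3))) := by
  rw [sum_val_sq]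
  unfold psum at h
  have := congrArg (ZMod.castHom (show (2:ℕ)^(t+3) ∣ 2^(t+4) from pow_dvd_pow 2 (by omega))
    (ZMod (2^(t+3)))) h
  rwa [map_natCast, map_intCast] at this

lemma card_split_levels (k t : ℕ) (lam : ℤ) :
    rho1 k lam 2 (t+3)
      = Nat.card {y : Fin k → ZMod (2^(t+3)) // psum k t lam y ∧ pprim k t y}
        + Nat.card {y : Fin k → ZMod (2^(t+3)) // psum k t (lam + 2^(t+3)) y ∧ pprim k t y} := by
  rw [rho1, card_split' (fun y : Fin k → ZMod (2^(t+3)) =>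
    (∑ i, y i ^ 2 = ((lam:ℤ) : ZMod (2^(t+3)))) ∧ ∃ i, ¬ ((2:ℕ) : ZMod (2^(t+3))) ∣ y i)
    (psum k t lam)]
  have hMN : ¬ ((2:ℤ)^(t+4) ∣ 2^(t+3)) := by
    intro h
    have := Int.le_of_dvd (by positivity) h
    have h2 : (2:ℤ)^(t+3) < 2^(t+4) := by
      have : (2:ℤ)^(t+3) * 1 < 2^(t+3) * 2 := by
        have : (0:ℤ) < 2^(t+3) := by positivity
        omega
      calc (2:ℤ)^(t+3) = 2^(t+3) * 1 := by ring
        _ < 2^(t+3) * 2 := this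
        _ = 2^(t+4) := by ring
    omega
  congr 1
  · refine Nat.card_congr (Equiv.subtypeEquivRight fun y => ?_)
    constructor
    · rintro ⟨⟨_, hp⟩, hs⟩; exact ⟨hs, hp⟩
    · rintro ⟨hs, hp⟩; exact ⟨⟨psum_to_sol k t lam y hs, hp⟩, hs⟩
  · refine Nat.card_congr (Equiv.subtypeEquivRight fun y => ?_)
    constructor
    · rintro ⟨⟨hsol, hp⟩, hns⟩
      refine ⟨?_, hp⟩
      -- from hsol : sum = lam mod N, and ¬ psum lam, deduce psum (lam + 2^(t+3))
      rw [sum_val_sq] at hsol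
      have hsol' : (((∑ i, (y i).val^2 : ℕ) : ℤ) : ZMod (2^(t+3))) = ((lam:ℤ) : ZMod (2^(t+3))) := by
        rw [← hsol]; push_cast; rfl
      rw [zmod_intCast_eq_iff] at hsol'
      obtain ⟨e, he⟩ := hsol'
      unfold psum
      rw [show ((∑ i, (y i).val^2 : ℕ) : ZMod (2^(t+4)))
        = (((∑ i, (y i).val^2 : ℕ) : ℤ) : ZMod (2^(t+4))) by push_cast; rfl,
        zmod_intCast_eq_iff]
      rcases Int.even_or_odd e with ⟨f, hf⟩ | ⟨f, hf⟩
      · exfalso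
        apply hns
        unfold psum
        rw [show ((∑ i, (y i).val^2 : ℕ) : ZMod (2^(t+4)))
          = (((∑ i, (y i).val^2 : ℕ) : ℤ) : ZMod (2^(t+4))) by push_cast; rfl,
          zmod_intCast_eq_iff]
        refine ⟨f, ?_⟩
        rw [he, hf]
        push_cast
        ring
      · refine ⟨f + 1, ?_⟩
        have : lam + 2^(t+3) - (∑ i, (y i).val^2 : ℕ) = (lam - (∑ i, (y i).val^2 : ℕ)) + 2^(t+3) := by
          ring
        rw [this, he, hf]
        push_cast
        ring
    · rintro ⟨hs, hp⟩
      have hsol : ∑ i, y i ^ 2 = ((lam:ℤ) : ZMod (2^(t+3))) := by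
        have := psum_to_sol k t (lam + 2^(t+3)) y hs
        rw [show (((lam + 2^(t+3) : ℤ)) : ZMod (2^(t+3))) = ((lam : ℤ) : ZMod (2^(t+3))) by
          rw [zmod_intCast_eq_iff]; exact ⟨-1, by push_cast; ring⟩] at this
        exact this
      refine ⟨⟨hsol, hp⟩, ?_⟩
      intro hps
      unfold psum at hps hs
      rw [hps] at hs
      rw [zmod_intCast_eq_iff] at hs
      apply hMN
      have : (lam + 2^(t+3)) - lam = (2:ℤ)^(t+3) := by ring
      rw [this] at hs
      exact_mod_cast hs

lemma rho1_step_s10 (k : ℕ) (hk : 0 < k) (t : ℕ) (lam : ℤ) :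
    rho1 k lam 2 (t+4) = 2^(k-1) * rho1 k lam 2 (t+3) := by
  rw [step1, card_split_levels, ← card_psum_swap, ← two_mul]
  rw [show (2:ℕ)^k = 2^(k-1) * 2 by
    rw [← pow_succ]; congr 1; omega]
  ring

lemma rho1_congr (k s : ℕ) (c c' : ℤ) (h : (c : ZMod (2^s)) = (c' : ZMod (2^s))) :
    rho1 k c 2 s = rho1 k c' 2 s := by
  rw [rho1, rho1]
  exact Nat.card_congr (Equiv.subtypeEquivRight fun y => by rw [h])

lemma rho1_stable (k : ℕ) (hk : 0 < k) (t : ℕ) (lam : ℤ) :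
    rho1 k lam 2 (t+3) = 2^(t*(k-1)) * rho1 k lam 2 3 := by
  induction t with
  | zero => simp
  | succ n ih =>
    rw [show n+1+3 = n+4 from rfl, rho1_step_s10 k hk n lam, ih, ← mul_assoc, ← pow_add]
    congr 2
    ring

lemma rho1_mod8 (k : ℕ) (c : ℤ) : rho1 k (c % 8) 2 3 = rho1 k c 2 3 := by
  refine rho1_congr k 3 (c % 8) c ?_
  rw [zmod_intCast_eq_iff]
  refine ⟨c / 8, ?_⟩
  push_cast
  omega

/-- For `λ = 2^r·λ'` with `λ'` odd,
`ρ_{k,λ}(2^s) = Σ_{i=0}^{⌊r/2⌋−1} 2^{ki+(s−2i−3)(k−1)} · ρ^{(1)}_{k,(λ/2^{2i}) mod 8}(8)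
+ 2^{k⌊r/2⌋} · ρ^{(1)}_{k,λ/2^{2⌊r/2⌋}}(2^{s−2⌊r/2⌋})`. -/
theorem rho_two_pow_nonzero (k : ℕ) (hk : 0 < k) (s : ℕ) (hs : 1 ≤ s)
    (lam : ℤ) (hlam0 : 0 < lam) (hlam1 : lam < 2 ^ s)
    (r : ℕ) (lam' : ℤ) (hr : r < s) (hfac : lam = 2 ^ r * lam') (hodd : Odd lam') :
    rho k lam (2 ^ s) =
      ∑ i ∈ Finset.range (r / 2),
        2 ^ (k * i + (s - 2 * i - 3) * (k - 1)) * rho1 k ((lam / 2 ^ (2 * i)) % 8) 2 3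
      + 2 ^ (k * (r / 2)) * rho1 k (lam / 2 ^ (2 * (r / 2))) 2 (s - 2 * (r / 2)) := by
  induction r using Nat.strong_induction_on generalizing s lam with
  | _ r IH =>
  rcases Nat.lt_or_ge r 2 with hr2 | hr2
  · -- base case : r/2 = 0
    have hdiv : r / 2 = 0 := Nat.div_eq_of_lt hr2
    rw [hdiv]
    simp only [Finset.range_zero, Finset.sum_empty, Nat.mul_zero, pow_zero, one_mul,
      Nat.sub_zero, zero_add]
    rw [show lam / (1:ℤ) = lam by omega]
    refine rho_eq_rho1 k s hs lam ?_
    have hodd2 : lam' % 2 = 1 := Int.odd_iff.mp hodd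
    rcases eq_or_lt_of_le hs with hs1 | hs2
    · -- s = 1
      have hr0 : r = 0 := by omega
      subst hr0
      rw [← hs1, show min 1 2 = 1 by norm_num, pow_one]
      rw [pow_zero, one_mul] at hfac
      rintro ⟨c, hc⟩
      omega
    · -- s ≥ 2
      rw [min_eq_right (by omega : 2 ≤ s)]
      rintro ⟨c, hc⟩
      interval_cases r
      · rw [pow_zero, one_mul] at hfac
        rw [hfac] at hc
        norm_num at hc
        omega
      · rw [pow_one] at hfac
        rw [hfac] at hc
        norm_num at hc
        omega
  · -- inductive case : r ≥ 2
    obtain ⟨m, rfl⟩ : ∃ m, r = m + 2 := ⟨r - 2, by omega⟩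
    obtain ⟨t₁, rfl⟩ : ∃ t₁, s = t₁ + 3 := ⟨s - 3, by omega⟩
    set mu : ℤ := 2 ^ m * lam' with hmu
    have hlam4 : lam = 4 * mu := by rw [hfac, hmu]; ring
    have h4pos : (0:ℤ) < 4 := by norm_num
    have hmupos : 0 < mu := by nlinarith
    have hmult : mu < 2 ^ (t₁ + 1) := by
      have : (2:ℤ)^(t₁+3) = 4 * 2^(t₁+1) := by ring
      nlinarith
    have hIH := IH m (by omega) (t₁+1) (by omega) mu hmupos hmult (by omega) rfl
    -- left side via recursion
    have hrec : rho k lam (2 ^ (t₁ + 3)) = rho1 k lam 2 (t₁+3) + 2^k * rho k mu (2^(t₁+1)) := by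
      rw [hlam4, show t₁ + 3 = (t₁+1)+2 from rfl]
      rw [rho_rec k (t₁+1) mu, ← hlam4]
    rw [hrec, hIH]
    -- first summand via stability
    have hst : rho1 k lam 2 (t₁+3) = 2^(t₁*(k-1)) * rho1 k ((lam / 2^(2*0)) % 8) 2 3 := by
      rw [rho1_stable k hk t₁ lam, show lam / (2:ℤ)^(2*0) = lam by simp, rho1_mod8]
    -- reindex the sum
    have hdiv2 : (m + 2) / 2 = m / 2 + 1 := by omega
    rw [hdiv2, Finset.sum_range_succ']
    have hf0 : 2 ^ (k * 0 + (t₁ + 3 - 2 * 0 - 3) * (k - 1)) * rho1 k ((lam / 2 ^ (2 * 0)) % 8) 2 3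
        = 2^(t₁*(k-1)) * rho1 k ((lam / 2^(2*0)) % 8) 2 3 := by
      rw [show t₁ + 3 - 2 * 0 - 3 = t₁ by omega,
        show k * 0 + t₁ * (k - 1) = t₁ * (k-1) by ring]
    have hdivstep : ∀ i : ℕ, lam / 2 ^ (2 * (i+1)) = mu / 2 ^ (2 * i) := by
      intro i
      rw [hlam4, show (2:ℤ) ^ (2 * (i+1)) = 4 * 2 ^ (2*i) by ring]
      exact Int.mul_ediv_mul_of_pos _ _ h4pos
    have hterm : ∀ i : ℕ,
        2 ^ (k * (i+1) + (t₁ + 3 - 2 * (i+1) - 3) * (k - 1)) * rho1 k ((lam / 2 ^ (2 * (i+1))) % 8) 2 3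
        = 2^k * (2 ^ (k * i + (t₁ + 1 - 2 * i - 3) * (k - 1)) * rho1 k ((mu / 2 ^ (2 * i)) % 8) 2 3) := by
      intro i
      rw [hdivstep i, show t₁ + 3 - 2 * (i+1) - 3 = t₁ + 1 - 2 * i - 3 by omega,
        show k * (i+1) + (t₁ + 1 - 2 * i - 3) * (k - 1)
          = k + (k * i + (t₁ + 1 - 2 * i - 3) * (k - 1)) by ring, pow_add, mul_assoc]
    have hlast : 2 ^ (k * (m / 2 + 1)) * rho1 k (lam / 2 ^ (2 * (m / 2 + 1))) 2 (t₁ + 3 - 2 * (m / 2 + 1))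
        = 2^k * (2 ^ (k * (m / 2)) * rho1 k (mu / 2 ^ (2 * (m / 2))) 2 (t₁ + 1 - 2 * (m / 2))) := by
      rw [hdivstep (m/2), show t₁ + 3 - 2 * (m/2 + 1) = t₁ + 1 - 2 * (m/2) by omega,
        show k * (m/2 + 1) = k + k * (m/2) by ring, pow_add, mul_assoc]
    rw [hst, ← hf0, Finset.sum_congr rfl (fun i _ => hterm i), hlast, ← Finset.mul_sum]
    ring
end
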